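/- arXiv:1103.3950 — 6 statements merged into one kernel-verified Lean document; each statement's English description precedes it below -/
import Mathlib

section
/- Let b be a pure Nash equilibrium of the simultaneous first-price auction game with some tie-breaking rule, let (S_1,…,S_n) be the allocation the tie-breaking rule produces at b, and let p_j = max_i b_{ij} for every item j. Then (S_1,…,S_n; p_1,…,p_m) is a Walrasian equilibrium. -/
/-!
Prices are the highest bids, so every winner pays exactly the price of what he wins. If bidder
`i` preferred a bundle `S` at these prices, he could bid `p j + δ` on the items of `S` and `0`
elsewhere: he would then win all of `S` (possibly more, which by monotonicity only helps) and pay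
`∑ j ∈ S, (p j + δ)`. Equilibrium bounds the utility of this deviation by his current utility, and
letting `δ → 0` gives the demand inequality.
-/

open MeasureTheory Finset

/-- A valuation: monotone non-decreasing with value `0` on the empty set. -/
def MonotoneVal {M : Type*} (v : Finset M → ℝ) : Prop :=
  v ∅ = 0 ∧ ∀ S T : Finset M, S ⊆ T → v S ≤ v T

/-- `S` assigns every item to exactly one bidder (it is a partition of the items). -/
def IsAllocation {N M : Type*} (S : N → Finset M) : Prop :=
  ∀ j : M, ∃! i : N, j ∈ S i

/-- A tie-breaking rule: it maps every bid profile to a partition of the items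
in which every item goes to a bidder whose bid on it is highest. -/
structure TieRule (N M : Type*) where
  alloc : (N → M → ℝ) → N → Finset M
  partition : ∀ b, IsAllocation (alloc b)
  highest : ∀ b i j, j ∈ alloc b i → ∀ i', b i' j ≤ b i j

/-- Bidder `i`'s (quasi-linear) utility in the simultaneous first-price auction. -/
def utility {N M : Type*} (v : N → Finset M → ℝ) (T : TieRule N M)
    (b : N → M → ℝ) (i : N) : ℝ :=
  v i (T.alloc b i) - ∑ j ∈ T.alloc b i, b i j

/-- Pure Nash equilibrium: no bidder can strictly gain by a unilateral
(nonnegative) deviation. -/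
def PureNash {N M : Type*} [DecidableEq N] (v : N → Finset M → ℝ) (T : TieRule N M)
    (b : N → M → ℝ) : Prop :=
  ∀ (i : N) (b' : M → ℝ), (∀ j, 0 ≤ b' j) →
    utility v T (Function.update b i b') i ≤ utility v T b i

/-- `ε`-equilibrium: no bidder can gain more than `ε` by a unilateral deviation. -/
def EpsNash {N M : Type*} [DecidableEq N] (v : N → Finset M → ℝ) (T : TieRule N M)
    (b : N → M → ℝ) (ε : ℝ) : Prop :=
  ∀ (i : N) (b' : M → ℝ), (∀ j, 0 ≤ b' j) →
    utility v T (Function.update b i b') i ≤ utility v T b i + ε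

/-- Walrasian equilibrium: a partition and nonnegative item prices such that
every bidder receives a demanded set. -/
def Walrasian {N M : Type*} (v : N → Finset M → ℝ) (S : N → Finset M) (p : M → ℝ) : Prop :=
  IsAllocation S ∧ (∀ j, 0 ≤ p j) ∧
    ∀ (i : N) (T : Finset M), v i T - ∑ j ∈ T, p j ≤ v i (S i) - ∑ j ∈ S i, p j

/-- Social welfare of an allocation. -/
def welfare {N M : Type*} [Fintype N] (v : N → Finset M → ℝ) (S : N → Finset M) : ℝ :=
  ∑ i, v i (S i)

/-- Expected utility of bidder `i` when bidders bid independently according to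
the mixed strategies `σ`. -/
noncomputable def expectedUtility {N M : Type*} [Fintype N]
    (v : N → Finset M → ℝ) (T : TieRule N M) (σ : N → Measure (M → ℝ)) (i : N) : ℝ :=
  ∫ b, utility v T b i ∂(Measure.pi σ)

/-- Mixed Nash equilibrium: no bidder can gain by deviating to any fixed
(nonnegative) bid vector. -/
def MixedNash {N M : Type*} [Fintype N] [DecidableEq N]
    (v : N → Finset M → ℝ) (T : TieRule N M) (σ : N → Measure (M → ℝ)) : Prop :=
  ∀ (i : N) (b' : M → ℝ), (∀ j, 0 ≤ b' j) →
    expectedUtility v T (Function.update σ i (Measure.dirac b')) i ≤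
      expectedUtility v T σ i

/-- Expected social welfare of a profile of mixed strategies. -/
noncomputable def expectedWelfare {N M : Type*} [Fintype N]
    (v : N → Finset M → ℝ) (T : TieRule N M) (σ : N → Measure (M → ℝ)) : ℝ :=
  ∫ b, welfare v (T.alloc b) ∂(Measure.pi σ)

/-- Every mixed strategy is supported on nonnegative bid vectors. -/
def NonnegMixed {N M : Type*} (σ : N → Measure (M → ℝ)) : Prop :=
  ∀ i, σ i {b | ∀ j, 0 ≤ b j} = 1

/-- The AND valuation: value `1` on the full set of items, `0` on proper subsets. -/
def andVal (M : Type*) [Fintype M] [DecidableEq M] : Finset M → ℝ :=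
  fun S => if S = Finset.univ then 1 else 0

/-- The OR valuation: value `v` on every nonempty set of items, `0` on `∅`. -/
def orVal (M : Type*) (v : ℝ) : Finset M → ℝ :=
  fun S => if S.Nonempty then v else 0

/-- A single-minded valuation: value `w` on every superset of `S`, `0` otherwise. -/
def singleMinded {M : Type*} [DecidableEq M] (S : Finset M) (w : ℝ) : Finset M → ℝ :=
  fun T => if S ⊆ T then w else 0

/-- `β`-XOS (β-fractionally subadditive) valuation. -/
def BetaXOS {M : Type*} (β : ℝ) (v : Finset M → ℝ) : Prop :=
  ∃ (k : ℕ) (lam : Fin (k + 1) → M → ℝ),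
    (∀ l j, 0 ≤ lam l j) ∧
    ∀ S : Finset M,
      (Finset.univ.sup' Finset.univ_nonempty fun l => ∑ j ∈ S, lam l j) ≤ v S ∧
      v S / β ≤ Finset.univ.sup' Finset.univ_nonempty fun l => ∑ j ∈ S, lam l j

lemma MonotoneVal.monotone {M : Type*} {v : Finset M → ℝ} (hv : MonotoneVal v) : Monotone v :=
  fun S S' h => hv.2 S S' h

lemma le_of_forall_pos_sub_mul_le {x y c : ℝ} (hc : 0 ≤ c) (h : ∀ δ > 0, x - c * δ ≤ y) :
    x ≤ y := by
  refine le_of_forall_pos_le_add fun ε hε => ?_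
  have hδ : 0 < ε / (c + 1) := by positivity
  have hcδ : c * (ε / (c + 1)) ≤ ε := by
    rw [mul_div_assoc', div_le_iff₀ (by positivity)]
    nlinarith
  linarith [h _ hδ]

namespace TieRule

variable {N M : Type*} (T : TieRule N M)

lemma bid_eq_of_mem_alloc {b : N → M → ℝ} {p : M → ℝ}
    (hp : ∀ j, IsGreatest (Set.range fun i => b i j) (p j)) {i : N} {j : M}
    (hj : j ∈ T.alloc b i) : b i j = p j := by
  obtain ⟨i', hi'⟩ := (hp j).1
  exact le_antisymm ((hp j).2 ⟨i, rfl⟩) (hi' ▸ T.highest b i j hj i')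

lemma mem_alloc_of_forall_lt {b : N → M → ℝ} {i : N} {j : M}
    (hlt : ∀ i' ≠ i, b i' j < b i j) : j ∈ T.alloc b i := by
  obtain ⟨i₀, hi₀, -⟩ := T.partition b j
  obtain rfl | hne := eq_or_ne i₀ i
  · exact hi₀
  · exact absurd (T.highest b i₀ j hi₀ i) (hlt i₀ hne).not_ge

end TieRule

def overbid {M : Type*} [DecidableEq M] (S : Finset M) (p : M → ℝ) (δ : ℝ) : M → ℝ :=
  fun j => if j ∈ S then p j + δ else 0

section Deviation

variable {N M : Type*} [DecidableEq N] [DecidableEq M]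

lemma overbid_nonneg {S : Finset M} {p : M → ℝ} (hp : ∀ j, 0 ≤ p j) {δ : ℝ} (hδ : 0 ≤ δ)
    (j : M) : 0 ≤ overbid S p δ j := by
  unfold overbid
  split_ifs
  · linarith [hp j]
  · rfl

lemma subset_alloc_update_overbid (T : TieRule N M) {b : N → M → ℝ} {p : M → ℝ}
    (hbp : ∀ i j, b i j ≤ p j) {δ : ℝ} (hδ : 0 < δ) (i : N) (S : Finset M) :
    S ⊆ T.alloc (Function.update b i (overbid S p δ)) i := by
  intro j hj
  refine T.mem_alloc_of_forall_lt fun i' hne => ?_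
  simp only [Function.update_self, Function.update_of_ne hne, overbid, if_pos hj]
  linarith [hbp i' j]

lemma le_utility_update_overbid {v : N → Finset M → ℝ} (hv : ∀ i, Monotone (v i))
    (T : TieRule N M) {b : N → M → ℝ} {p : M → ℝ} (hbp : ∀ i j, b i j ≤ p j) {δ : ℝ}
    (hδ : 0 < δ) (i : N) (S : Finset M) :
    v i S - ∑ j ∈ S, (p j + δ) ≤ utility v T (Function.update b i (overbid S p δ)) i := by
  set A := T.alloc (Function.update b i (overbid S p δ)) i
  have hSA : S ⊆ A := subset_alloc_update_overbid T hbp hδ i S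
  have hpay : ∑ j ∈ A, overbid S p δ j = ∑ j ∈ S, (p j + δ) := by
    unfold overbid
    rw [Finset.sum_ite_mem, Finset.inter_eq_right.mpr hSA]
  rw [utility, Function.update_self, hpay]
  linarith [hv i hSA]

end Deviation

/-- A pure Nash equilibrium of the simultaneous first-price auction game,
with the allocation produced by the tie-breaking rule and prices `p j = max_i b i j`,
is a Walrasian equilibrium. -/
theorem pure_nash_to_walrasian {n m : ℕ} (v : Fin n → Finset (Fin m) → ℝ)
    (hmono : ∀ i, MonotoneVal (v i))
    (T : TieRule (Fin n) (Fin m)) (b : Fin n → Fin m → ℝ)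
    (hb : ∀ i j, 0 ≤ b i j)
    (hN : PureNash v T b)
    (p : Fin m → ℝ) (hp : ∀ j, IsGreatest (Set.range fun i => b i j) (p j)) :
    Walrasian v (T.alloc b) p := by
  have hbp : ∀ i j, b i j ≤ p j := fun i j => (hp j).2 ⟨i, rfl⟩
  have hp0 : ∀ j, 0 ≤ p j := fun j => by
    obtain ⟨i, hi⟩ := (hp j).1
    exact hi ▸ hb i j
  refine ⟨T.partition b, hp0, fun i S => ?_⟩
  have hpay : ∑ j ∈ T.alloc b i, b i j = ∑ j ∈ T.alloc b i, p j :=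
    Finset.sum_congr rfl fun j hj => T.bid_eq_of_mem_alloc hp hj
  refine le_of_forall_pos_sub_mul_le (Nat.cast_nonneg S.card) fun δ hδ => ?_
  calc v i S - ∑ j ∈ S, p j - S.card * δ = v i S - ∑ j ∈ S, (p j + δ) := by
        rw [Finset.sum_add_distrib, Finset.sum_const, nsmul_eq_mul]; ring
    _ ≤ utility v T (Function.update b i (overbid S p δ)) i :=
        le_utility_update_overbid (fun i => (hmono i).monotone) T hbp hδ i S
    _ ≤ utility v T b i := hN i _ (overbid_nonneg hp0 hδ.le)
    _ = v i (T.alloc b i) - ∑ j ∈ T.alloc b i, p j := by rw [utility, hpay]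
end

section
/- Every pure Nash equilibrium of the simultaneous first-price auction game, under any tie-breaking rule, yields an allocation whose social welfare equals OPT, the maximum possible social welfare; that is, the price of anarchy of pure Nash equilibria is 1. -/
open MeasureTheory Finset

/-!
At a pure equilibrium, price every item at its highest bid. A bidder who wants a bundle `U` can
outbid everybody on `U` by an arbitrarily small `δ` per item and bid `0` elsewhere, so by
monotonicity the equilibrium gives him a bundle that is in demand at these prices: the equilibrium
allocation and the highest bids form a Walrasian equilibrium. By the first welfare theorem a
Walrasian allocation maximizes welfare, since under any other allocation every bidder's surplus is
at most his Walrasian surplus and both allocations sell every item exactly once.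
-/

theorem IsAllocation.sum_sum_eq {N M : Type*} [Fintype N] [Fintype M] {S : N → Finset M}
    (hS : IsAllocation S) (f : M → ℝ) : ∑ i, ∑ j ∈ S i, f j = ∑ j, f j := by
  choose owner howner huniq using hS
  have hmem : ∀ i j, i ∈ univ ∧ j ∈ S i ↔ i ∈ ({owner j} : Finset N) ∧ j ∈ univ := by
    intro i j
    simpa [eq_comm] using ⟨huniq j i, fun h => h ▸ howner j⟩
  rw [Finset.sum_comm' hmem]
  simp

theorem Walrasian.welfare_le {N M : Type*} [Fintype N] [Fintype M] {v : N → Finset M → ℝ}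
    {S S' : N → Finset M} {p : M → ℝ} (h : Walrasian v S p) (hS' : IsAllocation S') :
    welfare v S' ≤ welfare v S := by
  obtain ⟨hS, -, hdemand⟩ := h
  have hsurplus := Finset.sum_le_sum fun i (_ : i ∈ univ) => hdemand i (S' i)
  simp only [Finset.sum_sub_distrib, hS.sum_sum_eq, hS'.sum_sum_eq] at hsurplus
  unfold welfare
  linarith

namespace TieRule

variable {N M : Type*} (T : TieRule N M) (b : N → M → ℝ)

noncomputable def winner (j : M) : N := (T.partition b j).exists.choose

theorem mem_alloc_winner (j : M) : j ∈ T.alloc b (T.winner b j) :=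
  (T.partition b j).exists.choose_spec

noncomputable def price (j : M) : ℝ := b (T.winner b j) j

theorem bid_le_price (i : N) (j : M) : b i j ≤ T.price b j :=
  T.highest b _ j (T.mem_alloc_winner b j) i

theorem bid_eq_price_of_mem {i : N} {j : M} (h : j ∈ T.alloc b i) : b i j = T.price b j :=
  (T.bid_le_price b i j).antisymm (T.highest b i j h _)

theorem utility_eq_sub_price (v : N → Finset M → ℝ) (i : N) :
    utility v T b i = v i (T.alloc b i) - ∑ j ∈ T.alloc b i, T.price b j := by
  unfold utility
  rw [Finset.sum_congr rfl fun j hj => T.bid_eq_price_of_mem b hj]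

theorem subset_alloc_update [DecidableEq N] {i : N} {b' : M → ℝ} {U : Finset M}
    (hbeat : ∀ j ∈ U, ∀ i' ≠ i, b i' j < b' j) :
    U ⊆ T.alloc (Function.update b i b') i := by
  intro j hj
  obtain ⟨i', hi'⟩ := (T.partition (Function.update b i b') j).exists
  obtain rfl | hne := eq_or_ne i' i
  · exact hi'
  · have hle := T.highest _ i' j hi' i
    rw [Function.update_self, Function.update_of_ne hne] at hle
    exact absurd hle (hbeat j hj i' hne).not_ge

end TieRule

section Equilibrium

variable {N M : Type*} [DecidableEq N] {v : N → Finset M → ℝ} {T : TieRule N M}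
  {b : N → M → ℝ}

theorem le_utility_update_of_subset {i : N} (hv : Monotone (v i)) {b' : M → ℝ} {U : Finset M}
    (hU : U ⊆ T.alloc (Function.update b i b') i) (hzero : ∀ j ∉ U, b' j = 0) :
    v i U - ∑ j ∈ U, b' j ≤ utility v T (Function.update b i b') i := by
  have hpay : ∑ j ∈ T.alloc (Function.update b i b') i, Function.update b i b' i j =
      ∑ j ∈ U, b' j := by
    simp only [Function.update_self]
    exact (Finset.sum_subset hU fun j _ hj => hzero j hj).symm
  unfold utility
  linarith [hv hU]

theorem PureNash.sub_sum_price_add_le_utility [DecidableEq M] (hN : PureNash v T b)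
    (hv : ∀ i, Monotone (v i)) (hb : ∀ i j, 0 ≤ b i j) (i : N) (U : Finset M) {δ : ℝ}
    (hδ : 0 < δ) : v i U - ∑ j ∈ U, (T.price b j + δ) ≤ utility v T b i := by
  set b' : M → ℝ := fun j => if j ∈ U then T.price b j + δ else 0
  have hb' : ∀ j, 0 ≤ b' j := fun j => by
    by_cases hj : j ∈ U <;> simp only [b', hj, if_true, if_false]
    · linarith [show 0 ≤ T.price b j from hb _ j]
    · rfl
  have hbeat : ∀ j ∈ U, ∀ i' ≠ i, b i' j < b' j := fun j hj i' _ => by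
    simp only [b', hj, if_true]
    linarith [T.bid_le_price b i' j]
  have hdev := le_utility_update_of_subset (hv i) (T.subset_alloc_update b hbeat)
    (b' := b') fun j hj => if_neg hj
  rw [Finset.sum_congr rfl fun j hj => if_pos hj] at hdev
  exact hdev.trans (hN i b' hb')

theorem PureNash.walrasian [DecidableEq M] (hN : PureNash v T b) (hv : ∀ i, Monotone (v i))
    (hb : ∀ i j, 0 ≤ b i j) : Walrasian v (T.alloc b) (T.price b) := by
  refine ⟨T.partition b, fun j => hb _ j, fun i U => ?_⟩
  rw [← T.utility_eq_sub_price]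
  refine le_of_forall_pos_le_add fun ε hε => ?_
  have hcard : (0 : ℝ) < #U + 1 := by positivity
  have hdev := hN.sub_sum_price_add_le_utility hv hb i U (div_pos hε hcard)
  have hsmall : #U * (ε / (#U + 1)) ≤ ε := by
    rw [mul_div_assoc', div_le_iff₀ hcard]
    nlinarith
  rw [Finset.sum_add_distrib, Finset.sum_const, nsmul_eq_mul] at hdev
  linarith

end Equilibrium

/-- Every pure Nash equilibrium of the simultaneous first-price auction game,
under any tie-breaking rule, has social welfare equal to the optimal social welfare `OPT`. -/
theorem pure_nash_welfare_optimal {n m : ℕ} (v : Fin n → Finset (Fin m) → ℝ)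
    (hmono : ∀ i, MonotoneVal (v i))
    (T : TieRule (Fin n) (Fin m)) (b : Fin n → Fin m → ℝ)
    (hb : ∀ i j, 0 ≤ b i j)
    (hN : PureNash v T b)
    (OPT : ℝ)
    (hOPT : IsGreatest
      {w | ∃ S : Fin n → Finset (Fin m), IsAllocation S ∧ welfare v S = w} OPT) :
    welfare v (T.alloc b) = OPT := by
  have hwalras := hN.walrasian (fun i => (hmono i).2) hb
  obtain ⟨⟨S, hS, rfl⟩, hmax⟩ := hOPT
  exact le_antisymm (hmax ⟨_, T.partition b, rfl⟩) (hwalras.welfare_le hS)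
end

section
/- For m ≥ 2 and v ≥ 0, the AND-OR valuation profile on m items admits a Walrasian equilibrium if and only if v ≤ 1/m. Moreover, when v ≤ 1/m, setting the price of every item to v and allocating all items to the AND bidder is a Walrasian equilibrium. -/
open MeasureTheory Finset

/-!
At prices `p`, the AND bidder demands all items only if `∑ p ≤ 1`, and the OR bidder demands
nothing only if every price is at least `v`; so an equilibrium giving everything to the AND bidder
forces `m v ≤ ∑ p ≤ 1`, and conversely uniform prices `v` support it when `m v ≤ 1`. No other
allocation is supported: if the AND bidder misses an item, its own bundle must be free, so the OR
bidder's nonempty bundle costs at least `1`; but the OR bidder demands that bundle only if every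
single item costs at least as much as the whole bundle, which is impossible with `m ≥ 2` items.
-/

def Demands {M : Type*} (u : Finset M → ℝ) (p : M → ℝ) (S : Finset M) : Prop :=
  ∀ T : Finset M, u T - ∑ j ∈ T, p j ≤ u S - ∑ j ∈ S, p j

theorem IsAllocation.compl_eq {M : Type*} [Fintype M] [DecidableEq M] {S : Fin 2 → Finset M}
    (hS : IsAllocation S) : (S 0)ᶜ = S 1 := by
  ext j
  obtain ⟨i, hi, huniq⟩ := hS j
  rw [mem_compl]
  fin_cases i
  · exact ⟨fun h => absurd hi h, fun h => absurd (huniq 1 h) (by decide)⟩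
  · exact ⟨fun _ => hi, fun h h' => absurd (huniq 0 h') (by decide)⟩

theorem isAllocation_univ_empty {M : Type*} [Fintype M] :
    IsAllocation ![(univ : Finset M), ∅] := by
  intro j
  refine ⟨0, mem_univ j, fun i hi => ?_⟩
  fin_cases i
  · rfl
  · simp at hi

section Demand

variable {M : Type*} {p : M → ℝ} {v : ℝ}

@[simp]
theorem orVal_empty : orVal M v ∅ = 0 := rfl

theorem orVal_of_nonempty {S : Finset M} (hS : S.Nonempty) : orVal M v S = v := if_pos hS

theorem le_of_demands_orVal_empty (h : Demands (orVal M v) p ∅) (j : M) : v ≤ p j := by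
  have := h {j}
  rw [orVal_of_nonempty (singleton_nonempty j)] at this
  simp only [sum_singleton, orVal_empty, sum_empty] at this
  linarith

theorem demands_orVal_empty (hv : 0 ≤ v) (hp : ∀ j, v ≤ p j) : Demands (orVal M v) p ∅ := by
  intro T
  rcases T.eq_empty_or_nonempty with rfl | ⟨j, hj⟩
  · exact le_rfl
  have : p j ≤ ∑ k ∈ T, p k := single_le_sum (fun k _ => hv.trans (hp k)) hj
  rw [orVal_of_nonempty ⟨j, hj⟩, orVal_empty, sum_empty]
  linarith [hp j]

theorem sum_le_of_demands_orVal {S : Finset M} (h : Demands (orVal M v) p S) (hS : S.Nonempty)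
    (j : M) : ∑ k ∈ S, p k ≤ p j := by
  have := h {j}
  rw [orVal_of_nonempty (singleton_nonempty j), orVal_of_nonempty hS, sum_singleton] at this
  linarith

variable [Fintype M] [DecidableEq M]

@[simp]
theorem andVal_univ : andVal M univ = 1 := if_pos rfl

theorem andVal_of_ne_univ {S : Finset M} (hS : S ≠ univ) : andVal M S = 0 := if_neg hS

theorem andVal_nonneg (S : Finset M) : 0 ≤ andVal M S := by
  unfold andVal; split_ifs <;> norm_num

theorem sum_le_one_of_demands_andVal_univ (h : Demands (andVal M) p univ) : ∑ j, p j ≤ 1 := by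
  have := h ∅
  rw [andVal_univ, sum_empty] at this
  linarith [andVal_nonneg (∅ : Finset M)]

theorem demands_andVal_univ (hp : ∀ j, 0 ≤ p j) (h : ∑ j, p j ≤ 1) :
    Demands (andVal M) p univ := by
  intro T
  rw [andVal_univ]
  by_cases hT : T = univ
  · rw [hT, andVal_univ]
  · rw [andVal_of_ne_univ hT]
    linarith [sum_nonneg fun j (_ : j ∈ T) => hp j]

theorem demands_andVal_of_ne_univ {S : Finset M} (h : Demands (andVal M) p S) (hS : S ≠ univ) :
    ∑ j ∈ S, p j ≤ 0 ∧ 1 + ∑ j ∈ S, p j ≤ ∑ j, p j := by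
  have hempty := h ∅
  have huniv := h univ
  rw [andVal_of_ne_univ hS, sum_empty] at hempty
  rw [andVal_of_ne_univ hS, andVal_univ] at huniv
  constructor <;> linarith [andVal_nonneg (∅ : Finset M)]

end Demand

section AndOr

variable {M : Type*} [Fintype M] [DecidableEq M] {v : ℝ}

theorem Walrasian.andOr_fst_eq_univ {S : Fin 2 → Finset M} {p : M → ℝ}
    (h : Walrasian ![andVal M, orVal M v] S p) (hM : 1 < Fintype.card M) : S 0 = univ := by
  obtain ⟨hS, -, hd⟩ := h
  by_contra hS0
  obtain ⟨hS0_nonpos, hS0_add⟩ := demands_andVal_of_ne_univ (hd 0) hS0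
  have hS1 : (S 1).Nonempty := by
    rw [← hS.compl_eq, nonempty_iff_ne_empty, Ne, compl_eq_empty_iff]
    exact hS0
  set q := ∑ j ∈ S 1, p j
  have htotal : ∑ j ∈ S 0, p j + q = ∑ j, p j := by
    rw [← sum_add_sum_compl (S 0) p, hS.compl_eq]
  have hq : 1 ≤ q := by linarith
  -- every item costs at least the OR bidder's whole bundle, so `|M| q ≤ ∑ p ≤ q`
  have hcard : (Fintype.card M : ℝ) * q ≤ ∑ j, p j := by
    simpa using card_nsmul_le_sum univ p q fun j _ => sum_le_of_demands_orVal (hd 1) hS1 j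
  have hM' : (2 : ℝ) ≤ Fintype.card M := by exact_mod_cast hM
  nlinarith

theorem Walrasian.andOr_card_mul_le_one {S : Fin 2 → Finset M} {p : M → ℝ}
    (h : Walrasian ![andVal M, orVal M v] S p) (hM : 1 < Fintype.card M) :
    (Fintype.card M : ℝ) * v ≤ 1 := by
  have hS0 := h.andOr_fst_eq_univ hM
  obtain ⟨hS, -, hd⟩ := h
  have hS1 : S 1 = ∅ := by rw [← hS.compl_eq, hS0, compl_univ]
  have hv : ∀ j, v ≤ p j := le_of_demands_orVal_empty (hS1 ▸ hd 1)
  calc (Fintype.card M : ℝ) * v ≤ ∑ j, p j := by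
        simpa using card_nsmul_le_sum univ p v fun j _ => hv j
    _ ≤ 1 := sum_le_one_of_demands_andVal_univ (hS0 ▸ hd 0)

theorem walrasian_andOr_univ_empty (hv : 0 ≤ v) (h : (Fintype.card M : ℝ) * v ≤ 1) :
    Walrasian ![andVal M, orVal M v] ![univ, ∅] fun _ => v := by
  refine ⟨isAllocation_univ_empty, fun _ => hv, fun i => ?_⟩
  fin_cases i
  · exact demands_andVal_univ (fun _ => hv) (by simpa using h)
  · exact demands_orVal_empty hv fun _ => le_rfl

end AndOr

/-- For `m ≥ 2` and `v ≥ 0`, the AND-OR valuation profile on `m` items admits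
a Walrasian equilibrium iff `v ≤ 1/m`; moreover when `v ≤ 1/m`, pricing every item at `v`
and allocating all items to the AND bidder is a Walrasian equilibrium. -/
theorem and_or_walrasian_iff {m : ℕ} (hm : 2 ≤ m) (v : ℝ) (hv : 0 ≤ v) :
    ((∃ (S : Fin 2 → Finset (Fin m)) (p : Fin m → ℝ),
        Walrasian ![andVal (Fin m), orVal (Fin m) v] S p) ↔ v ≤ 1 / m) ∧
      (v ≤ 1 / m →
        Walrasian ![andVal (Fin m), orVal (Fin m) v]
          ![(Finset.univ : Finset (Fin m)), (∅ : Finset (Fin m))] (fun _ => v)) := by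
  have hcard : 1 < Fintype.card (Fin m) := by rw [Fintype.card_fin]; omega
  have hbound : v ≤ 1 / m ↔ (Fintype.card (Fin m) : ℝ) * v ≤ 1 := by
    rw [Fintype.card_fin, le_div_iff₀' (by positivity)]
  have hsuff (hvm : v ≤ 1 / m) := walrasian_andOr_univ_empty hv (hbound.1 hvm)
  exact ⟨⟨fun ⟨_, _, h⟩ => hbound.2 (h.andOr_card_mul_le_one hcard),
    fun hvm => ⟨_, _, hsuff hvm⟩⟩, hsuff⟩
end

section
/- Consider the AND-OR game on 2 items with v > 1/2. Let the AND bidder draw y ∈ [0,1/2] from the distribution with cumulative distribution function F(y) = (v − 1/2)/(v − y) (which has an atom at 0 of mass 1 − 1/(2v)) and bid (y,y), and let the OR bidder draw x ∈ [0,1/2] from the distribution with cumulative distribution function G(x) = x/(1−x), choose one of the two items uniformly at random, and bid x on that item and 0 on the other. This pair of mixed strategies is a mixed Nash equilibrium of the game under any tie-breaking rule; in it the AND bidder's expected utility is 0 and the OR bidder's expected utility is v − 1/2. -/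
open MeasureTheory Finset

/-!
Each bidder's opponent strategy makes him indifferent over the support of his own strategy.
Against `G`, the AND bid `(y, y)` with `0 ≤ y ≤ 1/2` wins both items when the OR bid `x` is
below `y`, and otherwise still pays for the item without an OR bid, so it earns
`G(y) (1 - y) - y = 0`. A deviation `(p, q)` wins the item carrying `x` only if `x ≤ p` and
always pays for the other one; averaging over the two items, it earns at most
`(G(p) (1 - p)⁺ - q + G(q) (1 - q)⁺ - p) / 2 ≤ 0` because `G(p) (1 - p)⁺ ≤ p`. Against `F`, the
OR bid `x ≤ 1/2` wins exactly when `y < x` and earns `F(x) (v - x) = v - 1/2`, while a deviation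
whose highest bid is `m` earns at most `F(m) (v - m)⁺ ≤ v - 1/2`.

The deviation bounds hold at every bid profile, and on the equilibrium path a tie `x = y` has
probability zero since `G` has no atoms, so the tie-breaking rule never matters. It may make
utilities non-measurable, though: on the path they agree a.e. with measurable functions, and a
deviation with non-integrable utility has expected utility `0` by convention.
-/

open scoped ENNReal
open Filter Topology

namespace TieRule

variable {M : Type*} (T : TieRule (Fin 2) M) (b : Fin 2 → M → ℝ) {j : M}

theorem mem_alloc_one_iff : j ∈ T.alloc b 1 ↔ j ∉ T.alloc b 0 := by
  obtain ⟨i, hi, huniq⟩ := T.partition b j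
  constructor
  · intro h1 h0
    exact absurd ((huniq 1 h1).trans (huniq 0 h0).symm) (by decide)
  · intro h0
    fin_cases i
    · exact absurd hi h0
    · exact hi

theorem alloc_one_eq_compl [Fintype M] [DecidableEq M] : T.alloc b 1 = (T.alloc b 0)ᶜ := by
  ext j
  rw [mem_compl, mem_alloc_one_iff]

theorem le_of_mem_alloc_zero (h : j ∈ T.alloc b 0) : b 1 j ≤ b 0 j :=
  T.highest b 0 j h 1

theorem le_of_notMem_alloc_zero (h : j ∉ T.alloc b 0) : b 0 j ≤ b 1 j :=
  T.highest b 1 j ((T.mem_alloc_one_iff b).2 h) 0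

theorem mem_alloc_zero_of_lt (h : b 1 j < b 0 j) : j ∈ T.alloc b 0 := by
  by_contra h0
  exact (T.le_of_notMem_alloc_zero b h0).not_gt h

theorem notMem_alloc_zero_of_lt (h : b 0 j < b 1 j) : j ∉ T.alloc b 0 :=
  fun h0 => (T.le_of_mem_alloc_zero b h0).not_gt h

theorem alloc_zero_eq_univ_of_lt [Fintype M] [DecidableEq M] {x y : ℝ} (hx : 0 ≤ x)
    (hxy : x < y) : T.alloc ![fun _ => y, Pi.single j x] 0 = univ := by
  refine eq_univ_of_forall fun k => T.mem_alloc_zero_of_lt _ ?_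
  by_cases hkj : k = j
  · subst hkj
    simpa using hxy
  · simpa [hkj] using hx.trans_lt hxy

end TieRule

section Utility

variable {M : Type*} [Fintype M] [DecidableEq M] (T : TieRule (Fin 2) M)

theorem utility_andVal (w : Finset M → ℝ) (b : Fin 2 → M → ℝ) :
    utility ![andVal M, w] T b 0 =
      (if T.alloc b 0 = univ then 1 else 0) - ∑ k ∈ T.alloc b 0, b 0 k := rfl

theorem utility_orVal (w : Finset M → ℝ) (v : ℝ) (b : Fin 2 → M → ℝ) :
    utility ![w, orVal M v] T b 1 =
      (if (T.alloc b 0)ᶜ.Nonempty then v else 0) - ∑ k ∈ (T.alloc b 0)ᶜ, b 1 k := by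
  rw [utility, T.alloc_one_eq_compl]
  rfl

theorem utility_andVal_le (w : Finset M → ℝ) (B : M → ℝ) (j : M) (x : ℝ) :
    utility ![andVal M, w] T ![B, Pi.single j x] 0 ≤
      (if x ≤ B j then max (1 - B j) 0 else 0) + (B j - ∑ k, B k) := by
  set b : Fin 2 → M → ℝ := ![B, Pi.single j x]
  set A := T.alloc b 0
  -- an item `k ≠ j` that the AND bidder loses is lost to a zero bid, so `B k ≤ 0`
  have hlost : ∑ k ∈ Aᶜ, B k ≤ if j ∈ A then 0 else B j := by
    calc ∑ k ∈ Aᶜ, B k ≤ ∑ k ∈ Aᶜ, Pi.single j (B j) k := by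
          refine sum_le_sum fun k hk => ?_
          have hle := T.le_of_notMem_alloc_zero b (mem_compl.1 hk)
          by_cases hkj : k = j
          · subst hkj; simp
          · simpa [b, hkj] using hle
      _ = if j ∈ A then 0 else B j := by
          by_cases hj : j ∈ A <;> simp [sum_pi_single', hj]
  have hpay : ∑ k ∈ A, B k + ∑ k ∈ Aᶜ, B k = ∑ k, B k := sum_add_sum_compl A B
  rw [utility_andVal]
  by_cases hj : j ∈ A
  · have hx : x ≤ B j := by simpa [b] using T.le_of_mem_alloc_zero b hj
    have hval : (if A = univ then (1 : ℝ) else 0) ≤ 1 := by split_ifs <;> norm_num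
    rw [if_pos hj] at hlost
    rw [if_pos hx]
    simp only [b, Matrix.cons_val_zero] at hpay ⊢
    linarith [le_max_left (1 - B j) 0]
  · have hA : A ≠ univ := fun h => hj (h ▸ mem_univ j)
    have hbound : (0 : ℝ) ≤ if x ≤ B j then max (1 - B j) 0 else 0 := by
      split_ifs <;> simp
    rw [if_neg hj] at hlost
    rw [if_neg hA]
    simp only [b, Matrix.cons_val_zero] at hpay ⊢
    linarith

theorem utility_orVal_le (w : Finset M → ℝ) (v y : ℝ) {B : M → ℝ} (hB : ∀ k, 0 ≤ B k) {j : M}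
    (hj : ∀ k, B k ≤ B j) :
    utility ![w, orVal M v] T ![fun _ => y, B] 1 ≤
      if y ≤ B j then max (v - B j) 0 else 0 := by
  set b : Fin 2 → M → ℝ := ![fun _ => y, B]
  rw [utility_orVal]
  set S := (T.alloc b 0)ᶜ
  by_cases hS : S.Nonempty
  · obtain ⟨i, hi⟩ := hS
    have hyi : y ≤ B i := T.le_of_notMem_alloc_zero b (mem_compl.1 hi)
    -- the highest bid `B j` is paid in full, or else it lost to `y ≤ B i`
    have hpay : B j ≤ ∑ k ∈ S, B k := by
      by_cases hjS : j ∈ S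
      · exact single_le_sum (fun k _ => hB k) hjS
      · have hjy : B j ≤ y := T.le_of_mem_alloc_zero b (by simpa [S] using hjS)
        exact hjy.trans (hyi.trans (single_le_sum (fun k _ => hB k) hi))
    rw [if_pos ⟨i, hi⟩, if_pos (hyi.trans (hj i))]
    simp only [b, Matrix.cons_val_one, Matrix.cons_val_fin_one]
    linarith [le_max_left (v - B j) 0]
  · rw [if_neg hS, not_nonempty_iff_eq_empty.1 hS, sum_empty, sub_zero]
    split_ifs <;> simp

theorem utility_andVal_of_ne (w : Finset M → ℝ) {x y : ℝ} (hx : 0 ≤ x) (hy : 0 ≤ y)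
    (hxy : x ≠ y) (j : M) :
    utility ![andVal M, w] T ![fun _ => y, Pi.single j x] 0 =
      (if x ≤ y then 1 - y else 0) - (Fintype.card M - 1) * y := by
  set b : Fin 2 → M → ℝ := ![fun _ => y, Pi.single j x]
  rw [utility_andVal]
  rcases hxy.lt_or_gt with hlt | hgt
  · rw [T.alloc_zero_eq_univ_of_lt hx hlt, if_pos rfl, if_pos hlt.le]
    simp only [b, Matrix.cons_val_zero, sum_const, card_univ, nsmul_eq_mul]
    ring
  · have hj : j ∉ T.alloc b 0 := T.notMem_alloc_zero_of_lt b (by simpa [b] using hgt)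
    have hA : T.alloc b 0 ≠ univ := fun h => hj (h ▸ mem_univ j)
    -- an item `k ≠ j` can only be lost at a tie `y = 0`, where it costs nothing
    have hpay : ∑ k ∈ T.alloc b 0, b 0 k = ∑ k ∈ univ.erase j, y := by
      refine sum_subset (fun k hk => mem_erase.2 ⟨fun h => hj (h ▸ hk), mem_univ k⟩) ?_
      intro k hk hkA
      have hyk := T.le_of_notMem_alloc_zero b hkA
      simp only [b, Matrix.cons_val_zero, Matrix.cons_val_one, Matrix.cons_val_fin_one,
        Pi.single_eq_of_ne (ne_of_mem_erase hk)] at hyk ⊢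
      exact le_antisymm hyk hy
    rw [if_neg hA, if_neg hgt.not_ge, hpay, sum_const, card_erase_of_mem (mem_univ j),
      card_univ, nsmul_eq_mul, Nat.cast_pred (Fintype.card_pos_iff.2 ⟨j⟩)]

theorem utility_orVal_of_ne (w : Finset M → ℝ) (v : ℝ) {x y : ℝ} (hx : 0 ≤ x) (hxy : x ≠ y)
    (j : M) :
    utility ![w, orVal M v] T ![fun _ => y, Pi.single j x] 1 =
      if y ≤ x then v - x else 0 := by
  set b : Fin 2 → M → ℝ := ![fun _ => y, Pi.single j x]
  rw [utility_orVal]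
  rcases hxy.lt_or_gt with hlt | hgt
  · simp [b, T.alloc_zero_eq_univ_of_lt hx hlt, hlt.not_ge]
  · have hj : j ∈ (T.alloc b 0)ᶜ :=
      mem_compl.2 (T.notMem_alloc_zero_of_lt b (by simpa [b] using hgt))
    rw [if_pos ⟨j, hj⟩, if_pos hgt.le]
    simp [b, hj, sum_pi_single']

end Utility

section RealLine

variable {μ : Measure ℝ}

theorem measure_Iio_eq_zero_of_forall_lt {a : ℝ} (h : ∀ x < a, μ (Set.Iic x) = 0) :
    μ (Set.Iio a) = 0 := by
  have hlt : ∀ n : ℕ, a - 1 / ((n : ℝ) + 1) < a := fun n => sub_lt_self a (by positivity)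
  have hlim : Tendsto (fun n : ℕ => a - 1 / ((n : ℝ) + 1)) atTop (𝓝 a) := by
    simpa using
      (tendsto_const_nhds (x := a)).sub (tendsto_one_div_add_atTop_nhds_zero_nat (𝕜 := ℝ))
  rw [← iUnion_Iic_eq_Iio_of_lt_of_tendsto hlt hlim]
  exact measure_iUnion_null fun n => h _ (hlt n)

theorem ae_mem_Icc_of_measure_Iic [IsProbabilityMeasure μ] {a b : ℝ}
    (ha : ∀ x < a, μ (Set.Iic x) = 0) (hb : μ (Set.Iic b) = 1) :
    ∀ᵐ x ∂μ, x ∈ Set.Icc a b := by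
  have hIoi : μ (Set.Ioi b) = 0 := by
    rwa [← Set.compl_Iic, prob_compl_eq_zero_iff measurableSet_Iic]
  rw [ae_iff]
  refine measure_mono_null (fun x hx => ?_)
    (measure_union_null (measure_Iio_eq_zero_of_forall_lt ha) hIoi)
  simpa only [Set.mem_ofPred_eq, Set.mem_Icc, not_and_or, not_le, Set.mem_union, Set.mem_Iio,
    Set.mem_Ioi] using hx

theorem measure_singleton_eq_zero_of_continuousWithinAt [IsProbabilityMeasure μ] {c : ℝ}
    (h : ContinuousWithinAt (fun x => μ.real (Set.Iic x)) (Set.Iio c) c) : μ {c} = 0 := by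
  have hcdf : ContinuousWithinAt (ProbabilityTheory.cdf μ) (Set.Iio c) c := by
    simpa only [← ProbabilityTheory.cdf_eq_real] using h
  rw [← ProbabilityTheory.measure_cdf μ, StieltjesFunction.measure_singleton,
    (ProbabilityTheory.monotone_cdf μ).continuousWithinAt_Iio_iff_leftLim_eq.1 hcdf, sub_self,
    ENNReal.ofReal_zero]

theorem integrable_ite_le [IsFiniteMeasure μ] (p c : ℝ) :
    Integrable (fun x => if x ≤ p then c else 0) μ :=
  (integrable_const c).indicator measurableSet_Iic

theorem integral_ite_le [IsFiniteMeasure μ] (p c : ℝ) :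
    ∫ x, (if x ≤ p then c else 0) ∂μ = μ.real (Set.Iic p) * c := by
  rw [← smul_eq_mul, ← integral_indicator_const c measurableSet_Iic]
  rfl

theorem ae_snd_ne_fst {ν : Measure ℝ} [SFinite ν] (h : ∀ᵐ y ∂μ, ν {y} = 0) :
    ∀ᵐ p ∂(μ.prod ν), p.2 ≠ p.1 := by
  rw [ae_iff]
  simp only [ne_eq, not_not]
  rw [Measure.measure_prod_null (measurableSet_eq_fun measurable_snd measurable_fst)]
  filter_upwards [h] with y hy
  simpa [Set.preimage] using hy

end RealLine

-- `andCDF v` and `orCDF` are the distribution functions `F` and `G` of the AND and OR bids.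
noncomputable def andCDF (v y : ℝ) : ℝ≥0∞ :=
  if y < 0 then 0 else if y ≤ 1 / 2 then ENNReal.ofReal ((v - 1 / 2) / (v - y)) else 1

noncomputable def orCDF (x : ℝ) : ℝ≥0∞ :=
  if x < 0 then 0 else if x ≤ 1 / 2 then ENNReal.ofReal (x / (1 - x)) else 1

section BidDistributions

variable {v : ℝ} {μF μG : Measure ℝ}

theorem measureReal_Iic_of_andCDF (hv : 1 / 2 < v) (hF : ∀ y, μF (Set.Iic y) = andCDF v y)
    {y : ℝ} (hy₀ : 0 ≤ y) (hy₁ : y ≤ 1 / 2) : μF.real (Set.Iic y) = (v - 1 / 2) / (v - y) := by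
  rw [measureReal_def, hF, andCDF, if_neg hy₀.not_gt, if_pos hy₁,
    ENNReal.toReal_ofReal (div_nonneg (by linarith) (by linarith))]

theorem ae_mem_Icc_of_andCDF [IsProbabilityMeasure μF] (hv : 1 / 2 < v)
    (hF : ∀ y, μF (Set.Iic y) = andCDF v y) : ∀ᵐ y ∂μF, y ∈ Set.Icc 0 (1 / 2) := by
  refine ae_mem_Icc_of_measure_Iic (fun y hy => by rw [hF, andCDF, if_pos hy]) ?_
  rw [hF, andCDF, if_neg (by norm_num), if_pos le_rfl, div_self (by linarith),
    ENNReal.ofReal_one]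

theorem measure_zero_of_andCDF [IsProbabilityMeasure μF] (hv : 1 / 2 < v)
    (hF : ∀ y, μF (Set.Iic y) = andCDF v y) : μF {0} = ENNReal.ofReal (1 - 1 / (2 * v)) := by
  have hIio : μF (Set.Iio 0) = 0 := measure_Iio_eq_zero_of_forall_lt fun y hy => by
    rw [hF, andCDF, if_pos hy]
  have hIic : μF (Set.Iic 0) = μF {0} := by
    rw [← Set.Iio_union_right, measure_union (by simp) (measurableSet_singleton 0), hIio,
      zero_add]
  rw [← hIic, hF, andCDF, if_neg (lt_irrefl 0), if_pos (by norm_num)]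
  congr 1
  have hv₀ : v ≠ 0 := by linarith
  field_simp
  ring

theorem measureReal_Iic_mul_le_of_andCDF [IsProbabilityMeasure μF] (hv : 1 / 2 < v)
    (hF : ∀ y, μF (Set.Iic y) = andCDF v y) {m : ℝ} (hm : 0 ≤ m) :
    μF.real (Set.Iic m) * max (v - m) 0 ≤ v - 1 / 2 := by
  rcases le_or_gt m (1 / 2) with hm₁ | hm₁
  · rw [measureReal_Iic_of_andCDF hv hF hm hm₁, max_eq_left (by linarith),
      div_mul_cancel₀ _ (by linarith)]
  · calc μF.real (Set.Iic m) * max (v - m) 0 ≤ 1 * max (v - m) 0 :=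
          mul_le_mul_of_nonneg_right measureReal_le_one (le_max_right _ _)
      _ ≤ v - 1 / 2 := by rw [one_mul]; exact max_le (by linarith) (by linarith)

theorem measureReal_Iic_of_orCDF (hG : ∀ x, μG (Set.Iic x) = orCDF x) {x : ℝ} (hx₀ : 0 ≤ x)
    (hx₁ : x ≤ 1 / 2) : μG.real (Set.Iic x) = x / (1 - x) := by
  rw [measureReal_def, hG, orCDF, if_neg hx₀.not_gt, if_pos hx₁,
    ENNReal.toReal_ofReal (div_nonneg hx₀ (by linarith))]

theorem ae_mem_Icc_of_orCDF [IsProbabilityMeasure μG] (hG : ∀ x, μG (Set.Iic x) = orCDF x) :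
    ∀ᵐ x ∂μG, x ∈ Set.Icc 0 (1 / 2) :=
  ae_mem_Icc_of_measure_Iic (fun x hx => by rw [hG, orCDF, if_pos hx])
    (by rw [hG, orCDF, if_neg (by norm_num), if_pos le_rfl]; norm_num)

theorem measure_singleton_of_orCDF [IsProbabilityMeasure μG]
    (hG : ∀ x, μG (Set.Iic x) = orCDF x) {c : ℝ} (hc₀ : 0 ≤ c) (hc₁ : c ≤ 1 / 2) :
    μG {c} = 0 := by
  rcases hc₀.eq_or_lt with rfl | hc₀
  · refine measure_mono_null (Set.singleton_subset_iff.2 (Set.mem_Iic.2 le_rfl)) ?_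
    rw [hG, orCDF]
    simp
  refine measure_singleton_eq_zero_of_continuousWithinAt ?_
  have hcont : ContinuousAt (fun x : ℝ => x / (1 - x)) c :=
    continuousAt_id.div (continuousAt_const.sub continuousAt_id) (by linarith)
  refine hcont.continuousWithinAt.congr_of_eventuallyEq ?_
    (measureReal_Iic_of_orCDF hG hc₀.le hc₁)
  filter_upwards [Ioo_mem_nhdsLT hc₀] with x hx
  exact measureReal_Iic_of_orCDF hG hx.1.le (hx.2.le.trans hc₁)

theorem measureReal_Iic_mul_le_of_orCDF [IsProbabilityMeasure μG]
    (hG : ∀ x, μG (Set.Iic x) = orCDF x) {p : ℝ} (hp : 0 ≤ p) :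
    μG.real (Set.Iic p) * max (1 - p) 0 ≤ p := by
  rcases le_or_gt p (1 / 2) with hp₁ | hp₁
  · rw [measureReal_Iic_of_orCDF hG hp hp₁, max_eq_left (by linarith),
      div_mul_cancel₀ _ (by linarith)]
  · calc μG.real (Set.Iic p) * max (1 - p) 0 ≤ 1 * max (1 - p) 0 :=
          mul_le_mul_of_nonneg_right measureReal_le_one (le_max_right _ _)
      _ ≤ p := by rw [one_mul]; exact max_le (by linarith) hp

end BidDistributions

section Integrals

variable {α β : Type*} [MeasurableSpace α] [MeasurableSpace β] {μ : Measure α}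
  {f g : α → β} {u : β → ℝ}

theorem integral_half_add_half_map (hf : MeasurableEmbedding f) (hg : MeasurableEmbedding g)
    (huf : Integrable (u ∘ f) μ) (hug : Integrable (u ∘ g) μ) :
    ∫ b, u b ∂((1 / 2 : ℝ≥0∞) • μ.map f + (1 / 2 : ℝ≥0∞) • μ.map g) =
      (∫ a, u (f a) ∂μ + ∫ a, u (g a) ∂μ) / 2 := by
  rw [integral_add_measure ((hf.integrable_map_iff.2 huf).smul_measure (by simp))
      ((hg.integrable_map_iff.2 hug).smul_measure (by simp)),
    integral_smul_measure, integral_smul_measure, hf.integral_map, hg.integral_map]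
  simp only [ENNReal.toReal_div, ENNReal.toReal_one, ENNReal.toReal_ofNat, smul_eq_mul]
  ring

theorem integral_half_add_half_map_of_ae_eq (hf : MeasurableEmbedding f)
    (hg : MeasurableEmbedding g) {w : α → ℝ} (hw : Integrable w μ)
    (huf : ∀ᵐ a ∂μ, u (f a) = w a) (hug : ∀ᵐ a ∂μ, u (g a) = w a) :
    ∫ b, u b ∂((1 / 2 : ℝ≥0∞) • μ.map f + (1 / 2 : ℝ≥0∞) • μ.map g) = ∫ a, w a ∂μ := by
  rw [integral_half_add_half_map hf hg (hw.congr (EventuallyEq.symm huf))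
    (hw.congr (EventuallyEq.symm hug)), integral_congr_ae huf, integral_congr_ae hug]
  ring

theorem integral_half_add_half_map_nonpos (hf : MeasurableEmbedding f)
    (hg : MeasurableEmbedding g) {w₁ w₂ : α → ℝ} (hw₁ : Integrable w₁ μ)
    (hw₂ : Integrable w₂ μ) (huf : ∀ a, u (f a) ≤ w₁ a) (hug : ∀ a, u (g a) ≤ w₂ a)
    (hw : ∫ a, w₁ a ∂μ + ∫ a, w₂ a ∂μ ≤ 0) :
    ∫ b, u b ∂((1 / 2 : ℝ≥0∞) • μ.map f + (1 / 2 : ℝ≥0∞) • μ.map g) ≤ 0 := by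
  by_cases hu : Integrable u ((1 / 2 : ℝ≥0∞) • μ.map f + (1 / 2 : ℝ≥0∞) • μ.map g)
  · have hcomp : ∀ {h : α → β}, MeasurableEmbedding h →
        Integrable u ((1 / 2 : ℝ≥0∞) • μ.map h) → Integrable (u ∘ h) μ := fun hh hi =>
      hh.integrable_map_iff.1 ((integrable_smul_measure (by simp) (by simp)).1 hi)
    have huf' := hcomp hf (hu.mono_measure (Measure.le_add_right le_rfl))
    have hug' := hcomp hg (hu.mono_measure (Measure.le_add_left le_rfl))
    have h₁ : ∫ a, u (f a) ∂μ ≤ ∫ a, w₁ a ∂μ := integral_mono huf' hw₁ huf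
    have h₂ : ∫ a, u (g a) ∂μ ≤ ∫ a, w₂ a ∂μ := integral_mono hug' hw₂ hug
    rw [integral_half_add_half_map hf hg huf' hug']
    linarith
  · rw [integral_undef hu]

theorem integral_map_le_of_le (hf : MeasurableEmbedding f) {w : α → ℝ} (hw : Integrable w μ)
    (huf : ∀ a, u (f a) ≤ w a) {C : ℝ} (hC : 0 ≤ C) (hwC : ∫ a, w a ∂μ ≤ C) :
    ∫ b, u b ∂(μ.map f) ≤ C := by
  rw [hf.integral_map]
  by_cases hu : Integrable (fun a => u (f a)) μ
  · exact (integral_mono hu hw huf).trans hwC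
  · rwa [integral_undef hu]

end Integrals

theorem MeasureTheory.Measure.pi_fin_two {X : Type*} [MeasurableSpace X] (μ ν : Measure X)
    [SigmaFinite μ] [SigmaFinite ν] :
    Measure.pi ![μ, ν] = (μ.prod ν).map fun p => ![p.1, p.2] := by
  have : ∀ i, SigmaFinite (![μ, ν] i) := Fin.forall_fin_two.2 ⟨‹_›, ‹_›⟩
  set e := MeasurableEquiv.piFinTwo fun _ : Fin 2 => X
  calc Measure.pi ![μ, ν] = ((Measure.pi ![μ, ν]).map e).map e.symm := e.map_symm_map.symm
    _ = (μ.prod ν).map fun p => ![p.1, p.2] := by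
      rw [(measurePreserving_piFinTwo fun i => ![μ, ν] i).map_eq]
      rfl

section MixedProfile

noncomputable def andMixed (μF : Measure ℝ) : Measure (Fin 2 → ℝ) :=
  μF.map fun y _ => y

noncomputable def orMixed (μG : Measure ℝ) : Measure (Fin 2 → ℝ) :=
  (1 / 2 : ℝ≥0∞) • μG.map (fun x => Pi.single 0 x) +
    (1 / 2 : ℝ≥0∞) • μG.map (fun x => Pi.single 1 x)

def pathProfile (j : Fin 2) (p : ℝ × ℝ) : Fin 2 → Fin 2 → ℝ :=
  ![fun _ => p.1, Pi.single j p.2]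

theorem continuous_pi_single (j : Fin 2) :
    Continuous fun x : ℝ => (Pi.single j x : Fin 2 → ℝ) :=
  continuous_single (A := fun _ : Fin 2 => ℝ) j

theorem measurableEmbedding_pathProfile (j : Fin 2) : MeasurableEmbedding (pathProfile j) :=
  ((continuous_pi fun _ => continuous_fst).matrixVecCons
    (((continuous_pi_single j).comp continuous_snd).matrixVecCons
      continuous_const)).measurableEmbedding
    fun p p' h => Prod.ext (by simpa [pathProfile] using congrFun (congrFun h 0) 0)
      (by simpa [pathProfile] using congrFun (congrFun h 1) j)

theorem measurableEmbedding_vecCons_single (B : Fin 2 → ℝ) (j : Fin 2) :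
    MeasurableEmbedding fun x : ℝ => (![B, Pi.single j x] : Fin 2 → Fin 2 → ℝ) :=
  (continuous_const.matrixVecCons
    ((continuous_pi_single j).matrixVecCons continuous_const)).measurableEmbedding
    fun x x' h => by simpa using congrFun (congrFun h 1) j

theorem measurableEmbedding_vecCons_const (B : Fin 2 → ℝ) :
    MeasurableEmbedding fun y : ℝ => (![fun _ => y, B] : Fin 2 → Fin 2 → ℝ) :=
  ((continuous_pi fun _ => continuous_id).matrixVecCons
    (continuous_const.matrixVecCons continuous_const)).measurableEmbedding
    fun y y' h => by simpa using congrFun (congrFun h 0) 0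

theorem measurable_const_bid : Measurable fun y : ℝ => (fun _ => y : Fin 2 → ℝ) :=
  (continuous_pi fun _ => continuous_id).measurable

theorem measurable_vecCons_pair :
    Measurable fun p : (Fin 2 → ℝ) × (Fin 2 → ℝ) => (![p.1, p.2] : Fin 2 → Fin 2 → ℝ) :=
  (continuous_fst.matrixVecCons (continuous_snd.matrixVecCons continuous_const)).measurable

instance (μF : Measure ℝ) [IsProbabilityMeasure μF] : IsProbabilityMeasure (andMixed μF) :=
  Measure.isProbabilityMeasure_map measurable_const_bid.aemeasurable

instance (μG : Measure ℝ) [IsProbabilityMeasure μG] : IsProbabilityMeasure (orMixed μG) := by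
  have := fun j =>
    Measure.isProbabilityMeasure_map (μ := μG) (continuous_pi_single j).aemeasurable
  constructor
  simp [orMixed, ENNReal.inv_two_add_inv_two]

theorem pi_mixed (μF μG : Measure ℝ) [IsProbabilityMeasure μF] [IsProbabilityMeasure μG] :
    Measure.pi ![andMixed μF, orMixed μG] =
      (1 / 2 : ℝ≥0∞) • (μF.prod μG).map (pathProfile 0) +
        (1 / 2 : ℝ≥0∞) • (μF.prod μG).map (pathProfile 1) := by
  have hs := fun j => (continuous_pi_single j).measurable
  rw [Measure.pi_fin_two, andMixed, orMixed, Measure.prod_add, Measure.prod_smul_right,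
    Measure.prod_smul_right, Measure.map_prod_map _ _ measurable_const_bid (hs 0),
    Measure.map_prod_map _ _ measurable_const_bid (hs 1),
    Measure.map_add _ _ measurable_vecCons_pair, Measure.map_smul, Measure.map_smul,
    Measure.map_map measurable_vecCons_pair (measurable_const_bid.prodMap (hs 0)),
    Measure.map_map measurable_vecCons_pair (measurable_const_bid.prodMap (hs 1))]
  rfl

theorem pi_update_mixed_zero (μF μG : Measure ℝ) [IsProbabilityMeasure μG] (B : Fin 2 → ℝ) :
    Measure.pi (Function.update ![andMixed μF, orMixed μG] 0 (Measure.dirac B)) =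
      (1 / 2 : ℝ≥0∞) • μG.map (fun x => ![B, Pi.single 0 x]) +
        (1 / 2 : ℝ≥0∞) • μG.map (fun x => ![B, Pi.single 1 x]) := by
  have hσ : Function.update ![andMixed μF, orMixed μG] 0 (Measure.dirac B) =
      ![Measure.dirac B, orMixed μG] := by
    ext1 i; fin_cases i <;> rfl
  have hs := fun j => (continuous_pi_single j).measurable
  rw [hσ, Measure.pi_fin_two, orMixed, Measure.prod_add, Measure.prod_smul_right,
    Measure.prod_smul_right, Measure.dirac_prod, Measure.dirac_prod,
    Measure.map_map measurable_prodMk_left (hs 0),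
    Measure.map_map measurable_prodMk_left (hs 1),
    Measure.map_add _ _ measurable_vecCons_pair, Measure.map_smul, Measure.map_smul,
    Measure.map_map measurable_vecCons_pair (measurable_prodMk_left.comp (hs 0)),
    Measure.map_map measurable_vecCons_pair (measurable_prodMk_left.comp (hs 1))]
  rfl

theorem pi_update_mixed_one (μF μG : Measure ℝ) [IsProbabilityMeasure μF] (B : Fin 2 → ℝ) :
    Measure.pi (Function.update ![andMixed μF, orMixed μG] 1 (Measure.dirac B)) =
      μF.map fun y => ![fun _ => y, B] := by
  have hσ : Function.update ![andMixed μF, orMixed μG] 1 (Measure.dirac B) =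
      ![andMixed μF, Measure.dirac B] := by
    ext1 i; fin_cases i <;> rfl
  rw [hσ, Measure.pi_fin_two, andMixed, Measure.prod_dirac,
    Measure.map_map measurable_prodMk_right measurable_const_bid,
    Measure.map_map measurable_vecCons_pair
      (measurable_prodMk_right.comp measurable_const_bid)]
  rfl

end MixedProfile

section Equilibrium

variable {μF μG : Measure ℝ}

theorem ae_bids_mem_Icc_ne [IsProbabilityMeasure μF] [IsProbabilityMeasure μG] {v : ℝ}
    (hv : 1 / 2 < v) (hF : ∀ y, μF (Set.Iic y) = andCDF v y) (hG : ∀ x, μG (Set.Iic x) = orCDF x) :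
    ∀ᵐ p ∂(μF.prod μG), p.1 ∈ Set.Icc 0 (1 / 2) ∧ p.2 ∈ Set.Icc 0 (1 / 2) ∧ p.2 ≠ p.1 := by
  have hdiag : ∀ᵐ p ∂(μF.prod μG), p.2 ≠ p.1 := ae_snd_ne_fst <| by
    filter_upwards [ae_mem_Icc_of_andCDF hv hF] with y hy
    exact measure_singleton_of_orCDF hG hy.1 hy.2
  filter_upwards [Measure.quasiMeasurePreserving_fst.ae (ae_mem_Icc_of_andCDF hv hF),
    Measure.quasiMeasurePreserving_snd.ae (ae_mem_Icc_of_orCDF hG), hdiag] with p h₁ h₂ h₃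
  exact ⟨h₁, h₂, h₃⟩

theorem expectedUtility_and_mixed [IsProbabilityMeasure μF] [IsProbabilityMeasure μG] {v : ℝ}
    (hv : 1 / 2 < v) (hF : ∀ y, μF (Set.Iic y) = andCDF v y)
    (hG : ∀ x, μG (Set.Iic x) = orCDF x) (T : TieRule (Fin 2) (Fin 2)) :
    expectedUtility ![andVal (Fin 2), orVal (Fin 2) v] T ![andMixed μF, orMixed μG] 0 = 0 := by
  set W : ℝ × ℝ → ℝ := fun p => (if p.2 ≤ p.1 then 1 - p.1 else 0) - p.1
  have hae : ∀ j, ∀ᵐ p ∂(μF.prod μG),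
      utility ![andVal (Fin 2), orVal (Fin 2) v] T (pathProfile j p) 0 = W p := fun j => by
    filter_upwards [ae_bids_mem_Icc_ne hv hF hG] with p ⟨hy, hx, hxy⟩
    rw [pathProfile, utility_andVal_of_ne T _ hx.1 hy.1 hxy j]
    norm_num [W]
  have hW : Integrable W (μF.prod μG) := by
    have hm : Measurable W := (Measurable.ite (measurableSet_le measurable_snd measurable_fst)
      (by fun_prop) measurable_const).sub measurable_fst
    refine Integrable.of_bound hm.aestronglyMeasurable 2 ?_
    filter_upwards [ae_bids_mem_Icc_ne hv hF hG] with p ⟨⟨hy₀, hy₁⟩, _⟩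
    simp only [W, Real.norm_eq_abs, abs_le]
    split_ifs <;> constructor <;> linarith
  rw [expectedUtility, pi_mixed μF μG, integral_half_add_half_map_of_ae_eq
    (measurableEmbedding_pathProfile 0) (measurableEmbedding_pathProfile 1) hW (hae 0) (hae 1),
    integral_prod _ hW]
  refine (integral_congr_ae ?_).trans (integral_zero _ _)
  filter_upwards [ae_mem_Icc_of_andCDF hv hF] with y ⟨hy₀, hy₁⟩
  -- `G(y) (1 - y) = y`: the AND bidder is indifferent among all bids `(y, y)`
  show ∫ x, (if x ≤ y then 1 - y else 0) - y ∂μG = 0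
  rw [integral_sub (integrable_ite_le _ _) (integrable_const _), integral_ite_le,
    measureReal_Iic_of_orCDF hG hy₀ hy₁, div_mul_cancel₀ _ (by linarith)]
  simp

theorem expectedUtility_or_mixed [IsProbabilityMeasure μF] [IsProbabilityMeasure μG] {v : ℝ}
    (hv : 1 / 2 < v) (hF : ∀ y, μF (Set.Iic y) = andCDF v y)
    (hG : ∀ x, μG (Set.Iic x) = orCDF x) (T : TieRule (Fin 2) (Fin 2)) :
    expectedUtility ![andVal (Fin 2), orVal (Fin 2) v] T ![andMixed μF, orMixed μG] 1 =
      v - 1 / 2 := by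
  set W : ℝ × ℝ → ℝ := fun p => if p.1 ≤ p.2 then v - p.2 else 0
  have hae : ∀ j, ∀ᵐ p ∂(μF.prod μG),
      utility ![andVal (Fin 2), orVal (Fin 2) v] T (pathProfile j p) 1 = W p := fun j => by
    filter_upwards [ae_bids_mem_Icc_ne hv hF hG] with p ⟨_, hx, hxy⟩
    rw [pathProfile, utility_orVal_of_ne T _ v hx.1 hxy j]
  have hW : Integrable W (μF.prod μG) := by
    have hm : Measurable W := Measurable.ite (measurableSet_le measurable_fst measurable_snd)
      (by fun_prop) measurable_const
    refine Integrable.of_bound hm.aestronglyMeasurable (|v| + 1) ?_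
    filter_upwards [ae_bids_mem_Icc_ne hv hF hG] with p ⟨_, ⟨hx₀, hx₁⟩, _⟩
    simp only [W, Real.norm_eq_abs]
    split_ifs
    · exact (abs_sub _ _).trans (by rw [abs_of_nonneg hx₀]; linarith)
    · simp only [abs_zero]
      positivity
  rw [expectedUtility, pi_mixed μF μG, integral_half_add_half_map_of_ae_eq
    (measurableEmbedding_pathProfile 0) (measurableEmbedding_pathProfile 1) hW (hae 0) (hae 1),
    integral_prod_symm _ hW]
  refine (integral_congr_ae (g := fun _ => v - 1 / 2) ?_).trans (by simp)
  filter_upwards [ae_mem_Icc_of_orCDF hG] with x ⟨hx₀, hx₁⟩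
  -- `F(x) (v - x) = v - 1/2`: the OR bidder is indifferent among all bids `x ∈ [0, 1/2]`
  show ∫ y, (if y ≤ x then v - x else 0) ∂μF = v - 1 / 2
  rw [integral_ite_le, measureReal_Iic_of_andCDF hv hF hx₀ hx₁,
    div_mul_cancel₀ _ (by linarith)]

theorem expectedUtility_and_deviation_nonpos [IsProbabilityMeasure μG]
    (hG : ∀ x, μG (Set.Iic x) = orCDF x) (T : TieRule (Fin 2) (Fin 2)) (v : ℝ) {B : Fin 2 → ℝ}
    (hB : ∀ j, 0 ≤ B j) :
    expectedUtility ![andVal (Fin 2), orVal (Fin 2) v] T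
      (Function.update ![andMixed μF, orMixed μG] 0 (Measure.dirac B)) 0 ≤ 0 := by
  set w : Fin 2 → ℝ → ℝ := fun j x =>
    (if x ≤ B j then max (1 - B j) 0 else 0) + (B j - ∑ k, B k)
  have hw : ∀ j, Integrable (w j) μG := fun j => (integrable_ite_le _ _).add (integrable_const _)
  have hint : ∀ j, ∫ x, w j x ∂μG ≤ 2 * B j - ∑ k, B k := fun j => by
    simp only [w]
    rw [integral_add (integrable_ite_le _ _) (integrable_const _), integral_ite_le,
      integral_const, probReal_univ, one_smul]
    linarith [measureReal_Iic_mul_le_of_orCDF hG (hB j)]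
  rw [expectedUtility, pi_update_mixed_zero μF μG]
  refine integral_half_add_half_map_nonpos (measurableEmbedding_vecCons_single B 0)
    (measurableEmbedding_vecCons_single B 1) (hw 0) (hw 1) (utility_andVal_le T _ B 0)
    (utility_andVal_le T _ B 1) ?_
  linarith [hint 0, hint 1, Fin.sum_univ_two B]

theorem expectedUtility_or_deviation_le [IsProbabilityMeasure μF] {v : ℝ} (hv : 1 / 2 < v)
    (hF : ∀ y, μF (Set.Iic y) = andCDF v y) (T : TieRule (Fin 2) (Fin 2)) {B : Fin 2 → ℝ}
    (hB : ∀ j, 0 ≤ B j) :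
    expectedUtility ![andVal (Fin 2), orVal (Fin 2) v] T
      (Function.update ![andMixed μF, orMixed μG] 1 (Measure.dirac B)) 1 ≤ v - 1 / 2 := by
  obtain ⟨j, hj⟩ := Finite.exists_max B
  rw [expectedUtility, pi_update_mixed_one μF μG]
  refine integral_map_le_of_le (measurableEmbedding_vecCons_const B) (integrable_ite_le _ _)
    (fun y => utility_orVal_le T _ v y hB hj) (by linarith) ?_
  rw [integral_ite_le]
  exact measureReal_Iic_mul_le_of_andCDF hv hF (hB j)

end Equilibrium

/-- In the AND-OR game on 2 items with `v > 1/2`, the AND bidder bidding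
`(y,y)` with `y` drawn from the CDF `F(y) = (v - 1/2)/(v - y)` on `[0,1/2]` (which has an
atom at `0` of mass `1 - 1/(2v)`), and the OR bidder bidding `x` drawn from the CDF
`G(x) = x/(1-x)` on `[0,1/2]` on one of the two items chosen uniformly at random (and `0`
on the other), form a mixed Nash equilibrium under any tie-breaking rule; the AND bidder's
expected utility is `0` and the OR bidder's is `v - 1/2`. -/
theorem and_or_two_items_mixed_nash (v : ℝ) (hv : 1 / 2 < v)
    (μF μG : Measure ℝ) (hμF : IsProbabilityMeasure μF) (hμG : IsProbabilityMeasure μG)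
    (hF : ∀ y : ℝ, μF (Set.Iic y) =
      if y < 0 then 0 else if y ≤ 1 / 2 then ENNReal.ofReal ((v - 1 / 2) / (v - y)) else 1)
    (hG : ∀ x : ℝ, μG (Set.Iic x) =
      if x < 0 then 0 else if x ≤ 1 / 2 then ENNReal.ofReal (x / (1 - x)) else 1)
    (σ : Fin 2 → Measure (Fin 2 → ℝ))
    (hσ0 : σ 0 = μF.map (fun y => fun _ : Fin 2 => y))
    (hσ1 : σ 1 = (1 / 2 : ENNReal) • μG.map (fun x => ![x, 0]) +
                 (1 / 2 : ENNReal) • μG.map (fun x => ![(0 : ℝ), x]))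
    (T : TieRule (Fin 2) (Fin 2)) :
    μF {0} = ENNReal.ofReal (1 - 1 / (2 * v)) ∧
    MixedNash ![andVal (Fin 2), orVal (Fin 2) v] T σ ∧
    expectedUtility ![andVal (Fin 2), orVal (Fin 2) v] T σ 0 = 0 ∧
    expectedUtility ![andVal (Fin 2), orVal (Fin 2) v] T σ 1 = v - 1 / 2 := by
  have hσ : σ = ![andMixed μF, orMixed μG] := by
    refine funext (Fin.forall_fin_two.2 ⟨hσ0, ?_⟩)
    have h₀ : ∀ x : ℝ, ![x, 0] = Pi.single 0 x := fun x => by ext i; fin_cases i <;> simp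
    have h₁ : ∀ x : ℝ, ![0, x] = Pi.single 1 x := fun x => by ext i; fin_cases i <;> simp
    simp only [hσ1, h₀, h₁, Matrix.cons_val_one, Matrix.cons_val_fin_one, orMixed]
  subst hσ
  have h₀ := expectedUtility_and_mixed hv hF hG T
  have h₁ := expectedUtility_or_mixed hv hF hG T
  refine ⟨measure_zero_of_andCDF hv hF, fun i B hB => ?_, h₀, h₁⟩
  fin_cases i
  · exact h₀ ▸ expectedUtility_and_deviation_nonpos hG T v hB
  · exact h₁ ▸ expectedUtility_or_deviation_le hv hF T hB
end

section
/- Consider the triangle game: three items {0,1,2} and three single-minded bidders, where bidder j (j = 0,1,2) has value 1 for any set containing both items j and j+1 (mod 3) and value 0 for every other set. If each bidder independently draws x uniformly at random from [0,1/2] (cumulative distribution function F(x) = 2x) and bids x on both items of his desired pair and 0 on the third item, then this profile of mixed strategies is a mixed Nash equilibrium under any tie-breaking rule, and each bidder's expected utility is 0. -/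
open MeasureTheory Finset

/-!
Fix bidder `i` and let him bid `p, q, r` on items `i, i + 1, i + 2`; his opponents bid `y`
(bidder `i + 2`, on items `i + 2` and `i`) and `z` (bidder `i + 1`, on items `i + 1` and `i + 2`),
with `y, z` independent of law `μ`. Since `μ` has a continuous CDF `F`, ties have probability zero,
so bidder `i` wins item `i` iff `y < p`, item `i + 1` iff `z < q` and item `i + 2` iff
`max y z < r`, whatever the tie-breaking rule. His expected utility is therefore
`F p F q - p F p - q F q - r F r ^ 2`. For `F t = min (2 t) 1` this is at most
`-2 (p - q) ^ 2 ≤ 0` when `p, q ≤ 1/2` (and nonpositive otherwise), and it vanishes on the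
equilibrium bids `(x, x, 0)` with `x ≤ 1/2`; integrating over his own draw gives both claims.
-/

open ProbabilityTheory Set

namespace MeasureTheory

section Independence

variable {ι α : Type*} [Fintype ι] [MeasurableSpace α] {μ : Measure α} [IsProbabilityMeasure μ]

theorem map_pi_prodMk_eval {j k : ι} (hjk : j ≠ k) :
    (Measure.pi fun _ : ι => μ).map (fun x => (x j, x k)) = μ.prod μ := by
  have hind := (iIndepFun_pi (μ := fun _ : ι => μ) (X := fun _ => id)
    fun _ => aemeasurable_id).indepFun hjk
  simp only [id_eq] at hind
  rw [hind.map_prod_eq_prod_map_map (measurable_pi_apply j).aemeasurable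
    (measurable_pi_apply k).aemeasurable, (measurePreserving_eval _ j).map_eq,
    (measurePreserving_eval _ k).map_eq]

theorem map_pi_prodMk_prodMk_eval {i j k : ι} (hij : i ≠ j) (hik : i ≠ k) (hjk : j ≠ k) :
    (Measure.pi fun _ : ι => μ).map (fun x => (x i, (x j, x k))) = μ.prod (μ.prod μ) := by
  have hind := ((iIndepFun_pi (μ := fun _ : ι => μ) (X := fun _ => id)
    fun _ => aemeasurable_id).indepFun_prodMk (fun _ => measurable_pi_apply _) j k i
      hij.symm hik.symm).symm
  simp only [id_eq] at hind
  rw [hind.map_prod_eq_prod_map_map (measurable_pi_apply i).aemeasurable (by fun_prop),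
    (measurePreserving_eval _ i).map_eq, map_pi_prodMk_eval hjk]

end Independence

theorem ae_pi_eval_ne {ι : Type*} [Fintype ι] {μ : Measure ℝ} [IsProbabilityMeasure μ]
    [NullSingletonClass μ] {j k : ι} (hjk : j ≠ k) {f : ℝ → ℝ} (hf : Measurable f) :
    ∀ᵐ x ∂Measure.pi fun _ : ι => μ, x k ≠ f (x j) := by
  have hS : MeasurableSet {p : ℝ × ℝ | p.2 ≠ f p.1} :=
    (measurableSet_eq_fun measurable_snd (hf.comp measurable_fst)).compl
  have hprod : ∀ᵐ p ∂μ.prod μ, p.2 ≠ f p.1 :=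
    (Measure.ae_prod_iff_ae_ae hS).2 (Filter.Eventually.of_forall fun a => by simp [ae_iff])
  rw [← map_pi_prodMk_eval hjk, ae_map_iff (by fun_prop) hS] at hprod
  exact hprod

theorem integral_map_of_eqOn {α β E : Type*} [MeasurableSpace α] [MeasurableSpace β]
    [NormedAddCommGroup E] [NormedSpace ℝ E] {μ : Measure α} {g : α → β} (hg : Measurable g)
    {f h : β → E} (hh : StronglyMeasurable h) {s : Set β} (hs : MeasurableSet s) (hfh : EqOn f h s)
    (hgs : ∀ᵐ x ∂μ, g x ∈ s) :
    ∫ y, f y ∂μ.map g = ∫ x, h (g x) ∂μ := by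
  have hae : f =ᵐ[μ.map g] h := by
    filter_upwards [(ae_map_iff hg.aemeasurable hs).2 hgs] with y hy using hfh hy
  rw [integral_congr_ae hae, integral_map hg.aemeasurable hh.aestronglyMeasurable]

theorem nullSingletonClass_of_continuous_cdf {μ : Measure ℝ} [IsProbabilityMeasure μ]
    (h : Continuous (cdf μ)) : NullSingletonClass μ :=
  ⟨fun a => by
    rw [← measure_cdf μ, StieltjesFunction.measure_singleton,
      h.continuousWithinAt.leftLim_eq, sub_self, ENNReal.ofReal_zero]⟩

end MeasureTheory

theorem TieRule.mem_alloc_iff_lt {N M : Type*} (T : TieRule N M) {b : N → M → ℝ} {i : N} {j : M}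
    {m : ℝ} (hle : ∀ k ≠ i, b k j ≤ m) (hmax : ∃ k ≠ i, b k j = m) (hne : b i j ≠ m) :
    j ∈ T.alloc b i ↔ m < b i j := by
  constructor
  · intro hj
    obtain ⟨k, -, rfl⟩ := hmax
    exact lt_of_le_of_ne (T.highest b i j hj k) hne.symm
  · intro hlt
    obtain ⟨w, hw, -⟩ := T.partition b j
    by_cases hwi : w = i
    · exact hwi ▸ hw
    · exact absurd (T.highest b w j hw i) (not_le.2 (lt_of_le_of_lt (hle w hwi) hlt))

namespace TriangleGame

theorem add_one_ne_self (i : Fin 3) : i + 1 ≠ i := by revert i; decide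

theorem add_two_ne_self (i : Fin 3) : i + 2 ≠ i := by revert i; decide

theorem forall_ne_iff {i : Fin 3} {P : Fin 3 → Prop} : (∀ k ≠ i, P k) ↔ P (i + 1) ∧ P (i + 2) := by
  refine ⟨fun h => ⟨h _ (add_one_ne_self i), h _ (add_two_ne_self i)⟩, fun ⟨h1, h2⟩ k hk => ?_⟩
  have hk' : ∀ i k : Fin 3, k ≠ i → k = i + 1 ∨ k = i + 2 := by decide
  rcases hk' i k hk with rfl | rfl
  exacts [h1, h2]

theorem sum_eq_rotate {M : Type*} [AddCommMonoid M] (i : Fin 3) (φ : Fin 3 → M) :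
    ∑ j, φ j = φ i + φ (i + 1) + φ (i + 2) := by
  rw [← Equiv.sum_comp (Equiv.addLeft i) φ, Fin.sum_univ_three]
  simp

abbrev triangleValuation (i : Fin 3) : Finset (Fin 3) → ℝ := singleMinded {i, i + 1} 1

def pairBid (k : Fin 3) (x : ℝ) : Fin 3 → ℝ :=
  fun j => if j ∈ ({k, k + 1} : Finset (Fin 3)) then x else 0

theorem pairBid_self (k : Fin 3) (x : ℝ) : pairBid k x k = x := by simp [pairBid]

theorem pairBid_add_one (k : Fin 3) (x : ℝ) : pairBid k x (k + 1) = x := by simp [pairBid]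

theorem pairBid_add_two (k : Fin 3) (x : ℝ) : pairBid k x (k + 2) = 0 := by
  fin_cases k <;> simp [pairBid]

theorem pairBid_add_one_apply (i : Fin 3) (z : ℝ) :
    pairBid (i + 1) z i = 0 ∧ pairBid (i + 1) z (i + 1) = z ∧ pairBid (i + 1) z (i + 2) = z := by
  fin_cases i <;> simp [pairBid]

theorem pairBid_add_two_apply (i : Fin 3) (y : ℝ) :
    pairBid (i + 2) y i = y ∧ pairBid (i + 2) y (i + 1) = 0 ∧ pairBid (i + 2) y (i + 2) = y := by
  fin_cases i <;> simp [pairBid]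

def NoTies (p q r y z : ℝ) : Prop := 0 ≤ y ∧ 0 ≤ z ∧ y ≠ p ∧ z ≠ q ∧ y ≠ r ∧ z ≠ r

/-- Utility of bidder `i` bidding `p, q, r` on items `i, i + 1, i + 2` when bidder `i + 2` bids `y`
on items `i + 2, i` and bidder `i + 1` bids `z` on items `i + 1, i + 2`, in the absence of ties. -/
noncomputable def ownUtility (p q r y z : ℝ) : ℝ :=
  (if y < p ∧ z < q then 1 else 0) - (if y < p then p else 0) - (if z < q then q else 0) -
    if y < r ∧ z < r then r else 0

theorem utility_eq_ownUtility (T : TieRule (Fin 3) (Fin 3)) {b : Fin 3 → Fin 3 → ℝ} {i : Fin 3}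
    {y z : ℝ} (hz : b (i + 1) = pairBid (i + 1) z) (hy : b (i + 2) = pairBid (i + 2) y)
    (hties : NoTies (b i i) (b i (i + 1)) (b i (i + 2)) y z) :
    utility triangleValuation T b i = ownUtility (b i i) (b i (i + 1)) (b i (i + 2)) y z := by
  obtain ⟨hy0, hz0, hne₀, hne₁, hne₂y, hne₂z⟩ := hties
  obtain ⟨hz₀, hz₁, hz₂⟩ := hz ▸ pairBid_add_one_apply i z
  obtain ⟨hy₀, hy₁, hy₂⟩ := hy ▸ pairBid_add_two_apply i y
  have hwin₀ : i ∈ T.alloc b i ↔ y < b i i :=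
    T.mem_alloc_iff_lt (forall_ne_iff.2 ⟨hz₀ ▸ hy0, hy₀.le⟩) ⟨i + 2, add_two_ne_self i, hy₀⟩
      (Ne.symm hne₀)
  have hwin₁ : i + 1 ∈ T.alloc b i ↔ z < b i (i + 1) :=
    T.mem_alloc_iff_lt (forall_ne_iff.2 ⟨hz₁.le, hy₁ ▸ hz0⟩) ⟨i + 1, add_one_ne_self i, hz₁⟩
      (Ne.symm hne₁)
  have hwin₂ : i + 2 ∈ T.alloc b i ↔ y < b i (i + 2) ∧ z < b i (i + 2) := by
    rw [← max_lt_iff]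
    refine T.mem_alloc_iff_lt (forall_ne_iff.2 ⟨hz₂ ▸ le_max_right y z, hy₂ ▸ le_max_left y z⟩)
      ?_ ?_
    · rcases max_choice y z with h | h
      exacts [⟨i + 2, add_two_ne_self i, hy₂.trans h.symm⟩,
        ⟨i + 1, add_one_ne_self i, hz₂.trans h.symm⟩]
    · rcases max_choice y z with h | h <;> rw [h]
      exacts [Ne.symm hne₂y, Ne.symm hne₂z]
  have hvalue : singleMinded {i, i + 1} 1 (T.alloc b i) =
      if i ∈ T.alloc b i ∧ i + 1 ∈ T.alloc b i then 1 else 0 := by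
    simp only [singleMinded, Finset.insert_subset_iff, Finset.singleton_subset_iff]
  have hpayment : ∑ j ∈ T.alloc b i, b i j = (if i ∈ T.alloc b i then b i i else 0) +
      (if i + 1 ∈ T.alloc b i then b i (i + 1) else 0) +
      (if i + 2 ∈ T.alloc b i then b i (i + 2) else 0) := by
    rw [← Finset.univ_inter (T.alloc b i), ← Finset.sum_ite_mem, sum_eq_rotate i]
    simp only [Finset.univ_inter]
  rw [utility, triangleValuation, hvalue, hpayment, ownUtility]
  simp only [hwin₀, hwin₁, hwin₂]
  split_ifs <;> ring

def uniformCdf (t : ℝ) : ℝ := max 0 (min (2 * t) 1)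

theorem continuous_uniformCdf : Continuous uniformCdf := by
  unfold uniformCdf; fun_prop

theorem uniformCdf_of_nonneg {t : ℝ} (ht : 0 ≤ t) : uniformCdf t = min (2 * t) 1 :=
  max_eq_right (le_min (by linarith) zero_le_one)

theorem cdf_eq_uniformCdf {μ : Measure ℝ} [IsProbabilityMeasure μ]
    (hcdf : ∀ x : ℝ, μ (Iic x) =
      if x < 0 then 0 else if x ≤ 1 / 2 then ENNReal.ofReal (2 * x) else 1) :
    cdf μ = uniformCdf := by
  funext x
  rw [cdf_eq_real, measureReal_def, hcdf x, uniformCdf]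
  split_ifs with hneg hhalf
  · simp [min_eq_left (by linarith : 2 * x ≤ 1), (by linarith : 2 * x ≤ 0)]
  · simp [min_eq_left (by linarith : 2 * x ≤ 1), not_lt.1 hneg]
  · simp [min_eq_right (by linarith : 1 ≤ 2 * x)]

theorem measureReal_Iio_eq_cdf {μ : Measure ℝ} [IsProbabilityMeasure μ] [NullSingletonClass μ]
    (t : ℝ) : μ.real (Iio t) = cdf μ t := by
  rw [cdf_eq_real, measureReal_congr Iio_ae_eq_Iic]

def ownPayoff (F : ℝ → ℝ) (p q r : ℝ) : ℝ := F p * F q - p * F p - q * F q - r * F r ^ 2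

theorem ownPayoff_uniformCdf_nonpos {p q r : ℝ} (hp : 0 ≤ p) (hq : 0 ≤ q) (hr : 0 ≤ r) :
    ownPayoff uniformCdf p q r ≤ 0 := by
  have hpay : 0 ≤ r * uniformCdf r ^ 2 := by positivity
  rw [ownPayoff, uniformCdf_of_nonneg hp, uniformCdf_of_nonneg hq]
  rcases le_total (2 * p) 1 with hp' | hp' <;> rcases le_total (2 * q) 1 with hq' | hq' <;>
    simp only [min_eq_left, min_eq_right, hp', hq'] <;> nlinarith [sq_nonneg (p - q)]

theorem ownPayoff_uniformCdf_diag {a : ℝ} (ha : a ≤ 1 / 2) : ownPayoff uniformCdf a a 0 = 0 := by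
  rcases lt_or_ge a 0 with hneg | hnonneg
  · have hzero : uniformCdf a = 0 := max_eq_left (min_le_of_left_le (by linarith))
    simp [ownPayoff, hzero]
  · rw [ownPayoff, uniformCdf_of_nonneg hnonneg, min_eq_left (by linarith)]
    ring

theorem measurable_pairBid (k : Fin 3) : Measurable (pairBid k) :=
  measurable_pi_lambda _ fun j => by
    by_cases hj : j ∈ ({k, k + 1} : Finset (Fin 3)) <;> simp [pairBid, hj, measurable_id']

theorem Measurable.ownUtility {α : Type*} [MeasurableSpace α] {p q r y z : α → ℝ}
    (hp : Measurable p) (hq : Measurable q) (hr : Measurable r) (hy : Measurable y)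
    (hz : Measurable z) : Measurable fun a => ownUtility (p a) (q a) (r a) (y a) (z a) := by
  unfold TriangleGame.ownUtility
  refine ((Measurable.ite ((measurableSet_lt hy hp).inter (measurableSet_lt hz hq))
    measurable_const measurable_const).sub (Measurable.ite (measurableSet_lt hy hp) hp
      measurable_const)).sub (Measurable.ite (measurableSet_lt hz hq) hq measurable_const) |>.sub
    (Measurable.ite ((measurableSet_lt hy hr).inter (measurableSet_lt hz hr)) hr measurable_const)

theorem measurableSet_noTies {α : Type*} [MeasurableSpace α] {p q r y z : α → ℝ}
    (hp : Measurable p) (hq : Measurable q) (hr : Measurable r) (hy : Measurable y)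
    (hz : Measurable z) : MeasurableSet {a | NoTies (p a) (q a) (r a) (y a) (z a)} := by
  simp only [NoTies]
  measurability

theorem abs_ownUtility_le (p q r y z : ℝ) : |ownUtility p q r y z| ≤ 1 + |p| + |q| + |r| := by
  have := abs_nonneg p; have := abs_nonneg q; have := abs_nonneg r
  have := le_abs_self p; have := le_abs_self q; have := le_abs_self r
  have := neg_abs_le p; have := neg_abs_le q; have := neg_abs_le r
  rw [ownUtility, abs_le]
  constructor <;> split_ifs <;> linarith

theorem ownUtility_eq_indicator (p q r : ℝ) (w : ℝ × ℝ) :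
    ownUtility p q r w.1 w.2 = (Iio p ×ˢ Iio q).indicator 1 w -
      p * (Iio p ×ˢ Set.univ).indicator 1 w - q * (Set.univ ×ˢ Iio q).indicator 1 w -
      r * (Iio r ×ˢ Iio r).indicator 1 w := by
  simp only [ownUtility, indicator_apply, Set.mem_prod, Set.mem_Iio, Set.mem_univ, and_true,
    true_and, Pi.one_apply]
  split_ifs <;> ring

variable {μ : Measure ℝ} [IsProbabilityMeasure μ]

theorem integral_ownUtility (p q r : ℝ) :
    ∫ w, ownUtility p q r w.1 w.2 ∂μ.prod μ = ownPayoff (fun t => μ.real (Iio t)) p q r := by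
  have hint : ∀ s t : Set ℝ, MeasurableSet s → MeasurableSet t →
      Integrable ((s ×ˢ t).indicator 1) (μ.prod μ) := fun s t hs ht =>
    (integrable_const (1 : ℝ)).indicator (hs.prod ht)
  have hbox : ∀ s t : Set ℝ, MeasurableSet s → MeasurableSet t →
      ∫ w, (s ×ˢ t).indicator 1 w ∂μ.prod μ = μ.real s * μ.real t := fun s t hs ht => by
    rw [integral_indicator_one (hs.prod ht), measureReal_prod_prod]
  simp_rw [ownUtility_eq_indicator]
  rw [integral_sub, integral_sub, integral_sub, integral_const_mul, integral_const_mul,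
    integral_const_mul, hbox _ _ measurableSet_Iio measurableSet_Iio,
    hbox _ _ measurableSet_Iio MeasurableSet.univ, hbox _ _ MeasurableSet.univ measurableSet_Iio,
    hbox _ _ measurableSet_Iio measurableSet_Iio]
  · simp only [ownPayoff, probReal_univ, mul_one]
    ring
  all_goals fun_prop (disch := measurability)

theorem integral_pi_ownUtility (i : Fin 3) {β : ℝ → Fin 3 → ℝ} (hβ : Measurable β)
    (hint : ∀ j, Integrable (fun a => β a j) μ) :
    ∫ x, ownUtility (β (x i) i) (β (x i) (i + 1)) (β (x i) (i + 2)) (x (i + 2)) (x (i + 1))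
        ∂(Measure.pi fun _ => μ) =
      ∫ a, ownPayoff (fun t => μ.real (Iio t)) (β a i) (β a (i + 1)) (β a (i + 2)) ∂μ := by
  set g : ℝ × ℝ × ℝ → ℝ := fun v =>
    ownUtility (β v.1 i) (β v.1 (i + 1)) (β v.1 (i + 2)) v.2.1 v.2.2
  have hg : Measurable g := by
    apply Measurable.ownUtility <;> fun_prop
  have hgint : Integrable g (μ.prod (μ.prod μ)) := by
    refine Integrable.mono' (g := fun v => 1 + |β v.1 i| + |β v.1 (i + 1)| + |β v.1 (i + 2)|)
      ?_ hg.aestronglyMeasurable (.of_forall fun v => abs_ownUtility_le ..)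
    exact ((((integrable_const 1).add (hint i).abs).add (hint _).abs).add (hint _).abs).comp_fst
      (μ.prod μ)
  have h₂₁ : i + 2 ≠ i + 1 := by fin_cases i <;> decide
  calc _ = ∫ x, g (x i, (x (i + 2), x (i + 1))) ∂(Measure.pi fun _ => μ) := rfl
    _ = ∫ v, g v ∂μ.prod (μ.prod μ) := by
      rw [← map_pi_prodMk_prodMk_eval (add_two_ne_self i).symm (add_one_ne_self i).symm h₂₁,
        integral_map (by fun_prop) hg.aestronglyMeasurable]
    _ = _ := by
      rw [integral_prod _ hgint]
      exact integral_congr_ae (.of_forall fun a =>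
        integral_ownUtility (μ := μ) (β a i) (β a (i + 1)) (β a (i + 2)))

theorem ae_mem_Icc_of_cdf
    (hcdf : ∀ x : ℝ, μ (Iic x) =
      if x < 0 then 0 else if x ≤ 1 / 2 then ENNReal.ofReal (2 * x) else 1) :
    ∀ᵐ a ∂μ, a ∈ Icc (0 : ℝ) (1 / 2) := by
  have hnonneg : ∀ᵐ a ∂μ, 0 ≤ a := by
    rw [ae_iff]
    simp only [not_le]
    exact measure_mono_null Iio_subset_Iic_self (by simp [hcdf 0])
  have hle : ∀ᵐ a ∂μ, a ≤ 1 / 2 :=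
    (prob_compl_eq_zero_iff measurableSet_Iic).2 (by rw [hcdf]; norm_num)
  filter_upwards [hnonneg, hle] with a using And.intro

theorem integrable_pairBid_apply (hsupp : ∀ᵐ a ∂μ, a ∈ Icc (0 : ℝ) (1 / 2)) (i j : Fin 3) :
    Integrable (fun a => pairBid i a j) μ := by
  refine .of_bound ((measurable_pi_apply j).comp (measurable_pairBid i)).aestronglyMeasurable
    (1 / 2) (hsupp.mono fun a ⟨ha₀, ha₁⟩ => ?_)
  unfold pairBid
  split_ifs
  · rw [Real.norm_eq_abs, abs_le]
    constructor <;> linarith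
  · norm_num

/-- `β` is bidder `i`'s bid vector as a function of his draw: `β = pairBid i` is the equilibrium
strategy, a constant `β` a deviation. -/
theorem expectedUtility_eq_integral_ownPayoff [NullSingletonClass μ] (hpos : ∀ᵐ a ∂μ, 0 ≤ a)
    (T : TieRule (Fin 3) (Fin 3)) (i : Fin 3) {β : ℝ → Fin 3 → ℝ} (hβ : Measurable β)
    (hint : ∀ j, Integrable (fun a => β a j) μ) :
    expectedUtility triangleValuation T (fun k => μ.map (Function.update pairBid i β k)) i =
      ∫ a, ownPayoff (fun t => μ.real (Iio t)) (β a i) (β a (i + 1)) (β a (i + 2)) ∂μ := by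
  set G := Function.update pairBid i β
  have hGi : G i = β := Function.update_self ..
  have hG₁ : G (i + 1) = pairBid (i + 1) := Function.update_of_ne (add_one_ne_self i) ..
  have hG₂ : G (i + 2) = pairBid (i + 2) := Function.update_of_ne (add_two_ne_self i) ..
  have hG : ∀ k, Measurable (G k) := by
    intro k
    rcases eq_or_ne k i with rfl | hk
    · exact hGi ▸ hβ
    · simpa [G, hk] using measurable_pairBid k
  have : ∀ k, IsProbabilityMeasure (μ.map (G k)) := fun k =>
    Measure.isProbabilityMeasure_map (hG k).aemeasurable
  set E : Set (Fin 3 → Fin 3 → ℝ) := {b | b (i + 1) = pairBid (i + 1) (b (i + 1) (i + 1)) ∧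
    b (i + 2) = pairBid (i + 2) (b (i + 2) (i + 2)) ∧
    NoTies (b i i) (b i (i + 1)) (b i (i + 2)) (b (i + 2) (i + 2)) (b (i + 1) (i + 1))}
  have hE : MeasurableSet E :=
    (measurableSet_eq_fun (by fun_prop) ((measurable_pairBid _).comp (by fun_prop))).inter
      ((measurableSet_eq_fun (by fun_prop) ((measurable_pairBid _).comp (by fun_prop))).inter
        (measurableSet_noTies (by fun_prop) (by fun_prop) (by fun_prop) (by fun_prop)
          (by fun_prop)))
  have hpos' : ∀ j, ∀ᵐ x ∂(Measure.pi fun _ : Fin 3 => μ), 0 ≤ x j := fun j =>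
    Measure.tendsto_eval_ae_ae.eventually hpos
  have hae : ∀ᵐ x ∂(Measure.pi fun _ : Fin 3 => μ), (fun k => G k (x k)) ∈ E := by
    filter_upwards [hpos' (i + 2), hpos' (i + 1),
      ae_pi_eval_ne (add_two_ne_self i).symm (f := fun a => β a i) (by fun_prop),
      ae_pi_eval_ne (add_one_ne_self i).symm (f := fun a => β a (i + 1)) (by fun_prop),
      ae_pi_eval_ne (add_two_ne_self i).symm (f := fun a => β a (i + 2)) (by fun_prop),
      ae_pi_eval_ne (add_one_ne_self i).symm (f := fun a => β a (i + 2)) (by fun_prop)]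
      with x h₁ h₂ h₃ h₄ h₅ h₆
    simp only [E, Set.mem_ofPred_eq, hG₁, hG₂, hGi, pairBid_self]
    exact ⟨trivial, trivial, h₁, h₂, h₃, h₄, h₅, h₆⟩
  rw [expectedUtility, ← Measure.pi_map_pi (fun k => (hG k).aemeasurable),
    ← integral_pi_ownUtility i hβ hint]
  refine (integral_map_of_eqOn (by fun_prop) ?_ hE
    (fun b hb => utility_eq_ownUtility T hb.1 hb.2.1 hb.2.2) hae).trans ?_
  · exact (Measurable.ownUtility (by fun_prop) (by fun_prop) (by fun_prop) (by fun_prop)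
      (by fun_prop)).stronglyMeasurable
  · simp only [hG₁, hG₂, hGi, pairBid_self]

end TriangleGame

open TriangleGame

/-- The triangle game: three items and three single-minded bidders, bidder `i`
valuing the pair `{i, i+1}` (mod 3) at `1`. If every bidder draws `x` uniformly from
`[0,1/2]` (CDF `F(x) = 2x`) and bids `x` on both items of his pair and `0` on the third,
then this is a mixed Nash equilibrium under any tie-breaking rule and every bidder's
expected utility is `0`. -/
theorem triangle_mixed_nash
    (μ : Measure ℝ) (hμ : IsProbabilityMeasure μ)
    (hcdf : ∀ x : ℝ, μ (Set.Iic x) =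
      if x < 0 then 0 else if x ≤ 1 / 2 then ENNReal.ofReal (2 * x) else 1)
    (σ : Fin 3 → Measure (Fin 3 → ℝ))
    (hσ : ∀ i : Fin 3, σ i =
      μ.map (fun x => fun j : Fin 3 => if j ∈ ({i, i + 1} : Finset (Fin 3)) then x else 0))
    (T : TieRule (Fin 3) (Fin 3)) :
    MixedNash (fun i : Fin 3 => singleMinded ({i, i + 1} : Finset (Fin 3)) 1) T σ ∧
    ∀ i : Fin 3,
      expectedUtility (fun i : Fin 3 => singleMinded ({i, i + 1} : Finset (Fin 3)) 1)
        T σ i = 0 := by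
  have : NullSingletonClass μ :=
    nullSingletonClass_of_continuous_cdf (cdf_eq_uniformCdf hcdf ▸ continuous_uniformCdf)
  have hF : (fun t => μ.real (Iio t)) = uniformCdf := by
    ext t; rw [measureReal_Iio_eq_cdf, cdf_eq_uniformCdf hcdf]
  have hsupp := ae_mem_Icc_of_cdf hcdf
  have hpos : ∀ᵐ a ∂μ, 0 ≤ a := hsupp.mono fun _ ha => ha.1
  have hequil : ∀ i, expectedUtility triangleValuation T σ i = 0 := by
    intro i
    have hσi : σ = fun k => μ.map (Function.update pairBid i (pairBid i) k) := by
      ext1 k; rw [Function.update_eq_self, hσ k]; rfl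
    rw [hσi, expectedUtility_eq_integral_ownPayoff hpos T i (measurable_pairBid i)
      (integrable_pairBid_apply hsupp i), hF]
    refine integral_eq_zero_of_ae (hsupp.mono fun a ha => ?_)
    dsimp only [Pi.zero_apply]
    rw [pairBid_self, pairBid_add_one, pairBid_add_two]
    exact ownPayoff_uniformCdf_diag ha.2
  refine ⟨fun i b' hb' => ?_, hequil⟩
  have hdev : Function.update σ i (Measure.dirac b') =
      fun k => μ.map (Function.update pairBid i (fun _ => b') k) := by
    ext1 k
    rcases eq_or_ne k i with rfl | hk
    · simp
    · rw [Function.update_of_ne hk, Function.update_of_ne hk, hσ k]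
      rfl
  rw [hequil i, hdev, expectedUtility_eq_integral_ownPayoff hpos T i measurable_const
    (fun _ => integrable_const _), hF, integral_const, probReal_univ, one_smul]
  exact ownPayoff_uniformCdf_nonpos (hb' _) (hb' _) (hb' _)
end

section
/- Let ℓ ≥ 2 and m = ℓ², with the items indexed by pairs (i,j) for i,j ∈ {1,…,ℓ}, and consider 2ℓ single-minded bidders: for each i a row bidder whose valuation is ℓ on every set containing row i = {(i,j) : 1 ≤ j ≤ ℓ} and 0 otherwise, and for each j a column bidder whose valuation is ℓ on every set containing column j = {(i,j) : 1 ≤ i ≤ ℓ} and 0 otherwise. Then the simultaneous first-price auction game for these valuations has, for a suitable tie-breaking rule, a pure Nash equilibrium whose social welfare is ℓ², which equals the optimal social welfare (so price of stability 1), and it also has a mixed Nash equilibrium whose expected social welfare is at most 2ℓ; hence its price of anarchy is at least ℓ/2 = √m/2. -/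
open MeasureTheory Finset

/-!
Pure equilibrium: everybody bids `1` on each item of its line and ties go to the row bidders.
Each row bidder then buys its row at price `l`, and nobody can gain, because getting a whole line
means outbidding a rival bid of `1` on each of its `l` items. A row and a column always share an
item, so no allocation satisfies both a row and a column bidder, and the welfare is at most `l²`.

Mixed equilibrium: every bidder draws a quantile `u` uniformly from `[0, 1]` and bids `u ^ (l - 1)`
on each item of its line. The `l` rivals of a bidder (one per item of its line) bid independently,
with a continuous distribution whose cdf `F` satisfies `F x ^ (l - 1) ≤ x`, with equality at the
bids actually made. Against them, any bid vector `x` wins the whole line with probability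
`∏ F (x j)` and pays on average at least `∑ x j * F (x j)`. By AM-GM,
`l * ∏ F (x j) ≤ ∑ F (x j) ^ l ≤ ∑ x j * F (x j)`, so no deviation has positive expected
utility, while the equilibrium bids have expected utility exactly `0`. A bidder gets its line
only if its quantile beats those of its rivals, which has probability `∫ u ^ l = 1 / (l + 1)`, so
the expected welfare is at most `2 l * l / (l + 1) ≤ 2 l`.
-/

open Function ProbabilityTheory

namespace MeasureTheory.Measure

theorem pi_setOf_forall_comp_mem {ι κ α : Type*} [Fintype ι] [Fintype κ] [MeasurableSpace α]
    (μ : ι → Measure α) [∀ i, IsProbabilityMeasure (μ i)] {o : κ → ι} (ho : Injective o)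
    (A : κ → Set α) :
    Measure.pi μ {b | ∀ j, b (o j) ∈ A j} = ∏ j, μ (o j) (A j) := by
  have hbox : {b : ι → α | ∀ j, b (o j) ∈ A j}
      = Set.univ.pi fun k => ⋂ (j) (_ : o j = k), A j := by
    ext b
    simp only [Set.mem_ofPred_eq, Set.mem_univ_pi, Set.mem_iInter]
    exact ⟨fun h k j hj => hj ▸ h j, fun h j => h (o j) j rfl⟩
  rw [hbox, pi_pi]
  refine (Fintype.prod_of_injective o ho _ _ (fun k hk => ?_) fun j => ?_).symm
  · have : (⋂ (j) (_ : o j = k), A j) = Set.univ := by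
      simp only [Set.iInter_eq_univ]
      exact fun j hj => absurd ⟨j, hj⟩ hk
    rw [this, measure_univ]
  · congr 1
    ext a
    simp only [Set.mem_iInter]
    exact ⟨fun ha j' hj' => ho hj' ▸ ha, fun h => h j rfl⟩

theorem measurePreserving_update_prod_pi {ι α : Type*} [Fintype ι] [DecidableEq ι]
    [MeasurableSpace α] (μ : ι → Measure α) [∀ i, IsProbabilityMeasure (μ i)] (i : ι) :
    MeasurePreserving (fun p : α × (ι → α) => update p.2 i p.1)
      ((μ i).prod (Measure.pi μ)) (Measure.pi μ) := by
  refine ⟨by fun_prop, (pi_eq fun s hs => ?_).symm⟩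
  have hpre : (fun p : α × (ι → α) => update p.2 i p.1) ⁻¹' Set.univ.pi s
      = s i ×ˢ Set.univ.pi (update s i Set.univ) := by
    ext ⟨c, b⟩
    simp only [Set.mem_preimage, Set.mem_univ_pi, Set.mem_prod]
    constructor
    · intro h
      refine ⟨by simpa using h i, fun k => ?_⟩
      rcases eq_or_ne k i with rfl | hk
      · simp
      · simpa [hk] using h k
    · rintro ⟨hc, hb⟩ k
      rcases eq_or_ne k i with rfl | hk
      · simpa using hc
      · simpa [hk] using hb k
  rw [map_apply (by fun_prop) (.univ_pi hs), hpre, prod_prod, pi_pi,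
    ← Finset.mul_prod_erase _ _ (Finset.mem_univ i),
    ← Finset.mul_prod_erase _ _ (Finset.mem_univ i)]
  simp only [update_self, measure_univ, one_mul]
  congr 1
  refine Finset.prod_congr rfl fun k hk => ?_
  rw [update_of_ne (Finset.ne_of_mem_erase hk)]

theorem integral_pi_eq_integral_integral_update_map {ι α β : Type*} [Fintype ι] [DecidableEq ι]
    [MeasurableSpace α] [MeasurableSpace β] (μ : ι → Measure α)
    [∀ i, IsProbabilityMeasure (μ i)] {i : ι} {ν : Measure β} {φ : β → α}
    (hφ : Measurable φ) (hμi : μ i = ν.map φ)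
    {f : (ι → α) → ℝ} (hf : Integrable f (Measure.pi μ)) :
    ∫ b, f b ∂Measure.pi μ = ∫ u, ∫ b, f (update b i (φ u)) ∂Measure.pi μ ∂ν := by
  have hF := measurePreserving_update_prod_pi μ i
  have hfF := hF.integrable_comp_of_integrable hf
  calc ∫ b, f b ∂Measure.pi μ
      = ∫ p, f (update p.2 i p.1) ∂(μ i).prod (Measure.pi μ) := by
        rw [← integral_map hF.aemeasurable (by rw [hF.map_eq]; exact hf.1), hF.map_eq]
    _ = ∫ c, ∫ b, f (update b i c) ∂Measure.pi μ ∂μ i := integral_prod _ hfF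
    _ = _ := by
      rw [hμi] at hfF ⊢
      exact integral_map hφ.aemeasurable hfF.integral_prod_left.aestronglyMeasurable

end MeasureTheory.Measure

theorem Real.card_mul_prod_le_sum_pow {ι : Type*} [Fintype ι] (t : ι → ℝ)
    (ht : ∀ i, 0 ≤ t i) :
    (Fintype.card ι : ℝ) * ∏ i, t i ≤ ∑ i, t i ^ Fintype.card ι := by
  set n := Fintype.card ι
  rcases Nat.eq_zero_or_pos n with hn | hn
  · rw [hn, Nat.cast_zero, zero_mul]
    exact sum_nonneg fun i _ => pow_nonneg (ht i) _
  have hw : ∑ _i : ι, (n : ℝ)⁻¹ = 1 := by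
    rw [sum_const, card_univ, nsmul_eq_mul]
    exact mul_inv_cancel₀ (by positivity)
  have amgm := Real.geom_mean_le_arith_mean_weighted univ (fun _ => (n : ℝ)⁻¹)
    (fun i => t i ^ n) (fun _ _ => by positivity) hw (fun i _ => pow_nonneg (ht i) n)
  simp only [Real.pow_rpow_inv_natCast (ht _) hn.ne', ← mul_sum] at amgm
  calc (n : ℝ) * ∏ i, t i ≤ n * ((n : ℝ)⁻¹ * ∑ i, t i ^ n) := by gcongr
    _ = ∑ i, t i ^ n := by field_simp

open Classical in
noncomputable def TieRule.favoredWinner {N M : Type*} [Finite N] (pref : M → N)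
    (b : N → M → ℝ) (q : M) : N :=
  haveI : Nonempty N := ⟨pref q⟩
  if ∀ k, b k q ≤ b (pref q) q then pref q else (Finite.exists_max fun k => b k q).choose

lemma TieRule.le_favoredWinner {N M : Type*} [Finite N] (pref : M → N) (b : N → M → ℝ)
    (q : M) (k : N) : b k q ≤ b (favoredWinner pref b q) q := by
  unfold favoredWinner
  split_ifs with h
  · exact h k
  · have : Nonempty N := ⟨pref q⟩
    exact (Finite.exists_max fun k => b k q).choose_spec k

noncomputable def TieRule.favoring {N M : Type*} [Finite N] [DecidableEq N] [Fintype M]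
    (pref : M → N) : TieRule N M where
  alloc b i := univ.filter fun q => favoredWinner pref b q = i
  partition b q := ⟨favoredWinner pref b q, by simp, fun k hk => by simpa [eq_comm] using hk⟩
  highest b i q hq k := by
    rw [← (mem_filter.1 hq).2]
    exact le_favoredWinner pref b q k

lemma TieRule.favoring_alloc {N M : Type*} [Finite N] [DecidableEq N] [Fintype M]
    {pref : M → N} {b : N → M → ℝ} (h : ∀ q k, b k q ≤ b (pref q) q) (i : N) :
    (favoring pref).alloc b i = univ.filter fun q => pref q = i := by
  simp [favoring, favoredWinner, h]

namespace RowsColumns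

abbrev Bidder (l : ℕ) := Fin l ⊕ Fin l
abbrev Item (l : ℕ) := Fin l × Fin l

variable {l : ℕ}

def demand : Bidder l → Finset (Item l) :=
  Sum.elim (fun a => univ.filter fun q => q.1 = a) (fun c => univ.filter fun q => q.2 = c)

def cell : Bidder l → Fin l → Item l :=
  Sum.elim (fun a j => (a, j)) (fun c j => (j, c))

def rival : Bidder l → Fin l → Bidder l :=
  Sum.elim (fun _ => Sum.inr) (fun _ => Sum.inl)

lemma mem_demand_iff {k : Bidder l} {q : Item l} :
    q ∈ demand k ↔ k = .inl q.1 ∨ k = .inr q.2 := by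
  cases k <;> simp [demand, eq_comm]

lemma cell_mem_demand (i : Bidder l) (j : Fin l) : cell i j ∈ demand i := by
  cases i <;> simp [demand, cell]

lemma cell_mem_demand_rival (i : Bidder l) (j : Fin l) : cell i j ∈ demand (rival i j) := by
  cases i <;> simp [demand, cell, rival]

lemma rival_ne (i : Bidder l) (j : Fin l) : rival i j ≠ i := by
  cases i <;> simp [rival]

lemma rival_injective (i : Bidder l) : Injective (rival i) := by
  cases i <;> simp [rival, Sum.inl_injective, Sum.inr_injective]

lemma cell_injective (i : Bidder l) : Injective (cell i) := by
  cases i <;> intro j j' h <;> simpa [cell] using h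

lemma eq_or_eq_rival_of_cell_mem_demand {i k : Bidder l} {j : Fin l}
    (h : cell i j ∈ demand k) : k = i ∨ k = rival i j := by
  cases i <;> rcases mem_demand_iff.1 h with rfl | rfl <;> simp [cell, rival]

lemma demand_nonempty (k : Bidder l) : (demand k).Nonempty := by
  cases k with
  | inl a => exact ⟨_, cell_mem_demand _ a⟩
  | inr c => exact ⟨_, cell_mem_demand _ c⟩

lemma demand_eq_map (i : Bidder l) : demand i = univ.map ⟨cell i, cell_injective i⟩ := by
  ext q
  cases i <;> cases q <;> simp [demand, cell, eq_comm]

lemma sum_demand {M : Type*} [AddCommMonoid M] (i : Bidder l) (f : Item l → M) :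
    ∑ q ∈ demand i, f q = ∑ j, f (cell i j) := by
  rw [demand_eq_map, sum_map]; rfl

lemma demand_subset_iff {i : Bidder l} {S : Finset (Item l)} :
    demand i ⊆ S ↔ ∀ j, cell i j ∈ S := by
  simp [demand_eq_map, Finset.subset_iff]

lemma sum_inter_demand (i : Bidder l) (S : Finset (Item l)) (f : Item l → ℝ) :
    ∑ q ∈ S ∩ demand i, f q = ∑ j, if cell i j ∈ S then f (cell i j) else 0 := by
  rw [inter_comm, ← sum_ite_mem, sum_demand]

def lineBid (k : Bidder l) (t : ℝ) : Item l → ℝ := fun q => if q ∈ demand k then t else 0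

lemma lineBid_cell (k : Bidder l) (t : ℝ) (j : Fin l) : lineBid k t (cell k j) = t :=
  if_pos (cell_mem_demand k j)

def BidsOn {M : Type*} (S : Finset M) (c : M → ℝ) : Prop :=
  ∀ q, 0 ≤ c q ∧ (q ∉ S → c q = 0)

lemma bidsOn_lineBid (k : Bidder l) {t : ℝ} (ht : 0 ≤ t) : BidsOn (demand k) (lineBid k t) :=
  fun q => by by_cases hq : q ∈ demand k <;> simp [lineBid, hq, ht]

def rivalBids (b : Bidder l → Item l → ℝ) (i : Bidder l) : Fin l → ℝ :=
  fun j => b (rival i j) (cell i j)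

lemma rivalBids_update (b : Bidder l → Item l → ℝ) (i : Bidder l) (c : Item l → ℝ) :
    rivalBids (update b i c) i = rivalBids b i := by
  ext j; simp [rivalBids, rival_ne]

section PureEquilibrium

variable {v : Bidder l → Finset (Item l) → ℝ} (hv : ∀ k, v k = singleMinded (demand k) l)

noncomputable def rowsFirst (l : ℕ) : TieRule (Bidder l) (Item l) :=
  TieRule.favoring fun q => .inl q.1

lemma rowsFirst_alloc_lineBid_one (i : Bidder l) :
    (rowsFirst l).alloc (fun k => lineBid k 1) i
      = Sum.elim (fun a => demand (.inl a)) (fun _ => ∅) i := by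
  have htop (q : Item l) (k : Bidder l) : lineBid k 1 q ≤ lineBid (.inl q.1) 1 q := by
    rw [show lineBid (.inl q.1) 1 q = 1 from if_pos (mem_demand_iff.2 (.inl rfl))]
    unfold lineBid; split_ifs <;> norm_num
  rw [rowsFirst, TieRule.favoring_alloc htop]
  ext q
  cases i <;> simp [demand, eq_comm]

include hv in
lemma utility_le_max_sub_sum_rivalBids (T : TieRule (Bidder l) (Item l))
    {b : Bidder l → Item l → ℝ} {i : Bidder l} (hbi : 0 ≤ b i) :
    utility v T b i ≤ max 0 (l - ∑ j, rivalBids b i j) := by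
  have hpay : 0 ≤ ∑ q ∈ T.alloc b i, b i q := sum_nonneg fun q _ => hbi q
  rw [utility, hv, singleMinded]
  split_ifs with hsub
  · refine le_max_of_le_right (sub_le_sub_left ?_ _)
    calc ∑ j, rivalBids b i j ≤ ∑ j, b i (cell i j) :=
          sum_le_sum fun j _ => T.highest b i _ (demand_subset_iff.1 hsub j) _
      _ = ∑ q ∈ demand i, b i q := (sum_demand i _).symm
      _ ≤ ∑ q ∈ T.alloc b i, b i q := sum_le_sum_of_subset_of_nonneg hsub fun q _ _ => hbi q
  · exact le_max_of_le_left (by linarith)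

include hv in
lemma utility_lineBid_one (i : Bidder l) :
    utility v (rowsFirst l) (fun k => lineBid k 1) i = 0 := by
  rw [utility, rowsFirst_alloc_lineBid_one, hv, singleMinded]
  cases i with
  | inl a => simp [sum_demand, lineBid_cell]
  | inr c => simp [(demand_nonempty _).ne_empty]

include hv in
theorem pureNash_lineBid_one : PureNash v (rowsFirst l) fun k => lineBid k 1 := by
  intro i b' hb'
  have hrivals : rivalBids (fun k => lineBid k 1) i = fun _ => 1 :=
    funext fun j => if_pos (cell_mem_demand_rival i j)
  rw [utility_lineBid_one hv]
  refine (utility_le_max_sub_sum_rivalBids hv _ (by rw [update_self]; exact hb')).trans ?_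
  simp [rivalBids_update, hrivals]

include hv in
theorem welfare_rowsFirst_lineBid_one :
    welfare v ((rowsFirst l).alloc fun k => lineBid k 1) = (l : ℝ) ^ 2 := by
  simp [welfare, rowsFirst_alloc_lineBid_one, hv, singleMinded, (demand_nonempty _).ne_empty, sq]

include hv in
theorem welfare_le_sq {S : Bidder l → Finset (Item l)} (hS : IsAllocation S) :
    welfare v S ≤ (l : ℝ) ^ 2 := by
  have hval (k : Bidder l) : v k (S k) = if demand k ⊆ S k then (l : ℝ) else 0 := by
    rw [hv]; rfl
  have hle (k : Bidder l) : v k (S k) ≤ l := by rw [hval]; split_ifs <;> simp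
  have hconflict (a c : Fin l) (ha : demand (.inl a) ⊆ S (.inl a))
      (hc : demand (.inr c) ⊆ S (.inr c)) : False :=
    Sum.inl_ne_inr <| (hS (a, c)).unique (ha (cell_mem_demand (.inl a) c))
      (hc (cell_mem_demand_rival (.inl a) c))
  have hsum (f : Fin l → Bidder l) : ∑ a, v (f a) (S (f a)) ≤ l * l :=
    (sum_le_sum fun a _ => hle _).trans (by simp)
  rw [welfare, Fintype.sum_sum_type, sq]
  by_cases hrow : ∃ a, demand (.inl a) ⊆ S (.inl a)
  · obtain ⟨a, ha⟩ := hrow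
    have hcols : ∑ c, v (.inr c) (S (.inr c)) = 0 :=
      sum_eq_zero fun c _ => by rw [hval, if_neg fun hc => hconflict a c ha hc]
    linarith [hsum Sum.inl]
  · simp only [not_exists] at hrow
    have hrows : ∑ a, v (.inl a) (S (.inl a)) = 0 :=
      sum_eq_zero fun a _ => by rw [hval, if_neg (hrow a)]
    linarith [hsum Sum.inr]

end PureEquilibrium

open unitInterval in
def eqBid (l : ℕ) (u : I) : ℝ := (u : ℝ) ^ (l - 1)

noncomputable def bidLaw (l : ℕ) : Measure ℝ := volume.map (eqBid l)

lemma measurable_eqBid : Measurable (eqBid l) := by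
  unfold eqBid; fun_prop

instance : IsProbabilityMeasure (bidLaw l) :=
  Measure.isProbabilityMeasure_map measurable_eqBid.aemeasurable

lemma eqBid_strictMono (hl : 2 ≤ l) : StrictMono (eqBid l) :=
  fun _ _ h => pow_lt_pow_left₀ h (unitInterval.nonneg _) (by omega)

lemma bidLaw_apply {A : Set ℝ} (hA : MeasurableSet A) : bidLaw l A = volume (eqBid l ⁻¹' A) :=
  Measure.map_apply measurable_eqBid hA

lemma measureReal_Iio_bidLaw (hl : 2 ≤ l) (x : ℝ) :
    (bidLaw l).real (Set.Iio x) = cdf (bidLaw l) x := by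
  have hx : bidLaw l {x} = 0 := by
    rw [bidLaw_apply (measurableSet_singleton x)]
    exact Set.Subsingleton.measure_zero
      (fun _ hu _ hw => (eqBid_strictMono hl).injective (hu.trans hw.symm)) _
  rw [measureReal_congr (Iio_ae_eq_Iic' hx), cdf_eq_real]

lemma cdf_bidLaw_eqBid (hl : 2 ≤ l) (u : unitInterval) : cdf (bidLaw l) (eqBid l u) = u := by
  rw [cdf_eq_real, measureReal_def, bidLaw_apply measurableSet_Iic]
  have : eqBid l ⁻¹' Set.Iic (eqBid l u) = Set.Iic u := by
    ext w; exact (eqBid_strictMono hl).le_iff_le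
  rw [this, unitInterval.volume_Iic, ENNReal.toReal_ofReal (unitInterval.nonneg u)]

lemma cdf_bidLaw_pow_le (hl : 2 ≤ l) {x : ℝ} (hx : 0 ≤ x) :
    cdf (bidLaw l) x ^ (l - 1) ≤ x := by
  rcases le_or_gt x 1 with hx1 | hx1
  · have hroot : x ^ ((l - 1 : ℕ) : ℝ)⁻¹ ∈ unitInterval :=
      ⟨by positivity, Real.rpow_le_one hx hx1 (by positivity)⟩
    have hbid : eqBid l ⟨_, hroot⟩ = x := Real.rpow_inv_natCast_pow hx (by omega)
    rw [← hbid, cdf_bidLaw_eqBid hl]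
    rfl
  · exact (pow_le_one₀ (cdf_nonneg _ x) (cdf_le_one _ x)).trans hx1.le

theorem mul_prod_cdf_bidLaw_le_sum (hl : 2 ≤ l) (x : Fin l → ℝ) (hx : ∀ j, 0 ≤ x j) :
    l * ∏ j, cdf (bidLaw l) (x j) ≤ ∑ j, x j * cdf (bidLaw l) (x j) := by
  set F := cdf (bidLaw l)
  have hpow (j : Fin l) : F (x j) ^ l ≤ x j * F (x j) := calc
    F (x j) ^ l = F (x j) ^ (l - 1) * F (x j) := by rw [← pow_succ]; congr; omega
    _ ≤ x j * F (x j) := by gcongr; exacts [cdf_nonneg _ _, cdf_bidLaw_pow_le hl (hx j)]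
  have amgm := Real.card_mul_prod_le_sum_pow (fun j => F (x j)) fun j => cdf_nonneg _ _
  rw [Fintype.card_fin] at amgm
  exact amgm.trans (sum_le_sum fun j _ => hpow j)

theorem mul_prod_cdf_bidLaw_eqBid (hl : 2 ≤ l) (u : unitInterval) :
    l * ∏ _j : Fin l, cdf (bidLaw l) (eqBid l u)
      = ∑ _j : Fin l, eqBid l u * cdf (bidLaw l) (eqBid l u) := by
  have hpow : eqBid l u * u = (u : ℝ) ^ l := by
    rw [eqBid, ← pow_succ, Nat.sub_add_cancel (by omega)]
  simp only [cdf_bidLaw_eqBid hl, prod_const, sum_const, card_univ, Fintype.card_fin, nsmul_eq_mul,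
    hpow]

noncomputable def eqStrategy (l : ℕ) (k : Bidder l) : Measure (Item l → ℝ) :=
  volume.map (lineBid k ∘ eqBid l)

lemma measurable_lineBid_eqBid (k : Bidder l) : Measurable (lineBid k ∘ eqBid l) := by
  refine (measurable_pi_lambda _ fun q => ?_).comp measurable_eqBid
  unfold lineBid; split_ifs <;> fun_prop

instance (k : Bidder l) : IsProbabilityMeasure (eqStrategy l k) :=
  Measure.isProbabilityMeasure_map (measurable_lineBid_eqBid k).aemeasurable

lemma eqStrategy_setOf_apply_mem {k : Bidder l} {q : Item l} (hq : q ∈ demand k) {A : Set ℝ}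
    (hA : MeasurableSet A) : eqStrategy l k {c | c q ∈ A} = bidLaw l A := by
  rw [eqStrategy, Measure.map_apply (measurable_lineBid_eqBid k)
    (show MeasurableSet {c : Item l → ℝ | c q ∈ A} from measurable_pi_apply q hA),
    bidLaw_apply hA]
  congr 1
  ext u
  simp [lineBid, hq]

lemma eqStrategy_nonneg (k : Bidder l) : eqStrategy l k {c | ∀ q, 0 ≤ c q} = 1 := by
  have hm : MeasurableSet {c : Item l → ℝ | ∀ q, 0 ≤ c q} := by
    simp only [Set.ofPred_forall]
    exact .iInter fun q => measurableSet_le measurable_const (measurable_pi_apply q)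
  have hpre : lineBid k ∘ eqBid l ⁻¹' {c | ∀ q, 0 ≤ c q} = Set.univ :=
    Set.eq_univ_of_forall fun u q => (bidsOn_lineBid k (pow_nonneg u.2.1 _) q).1
  rw [eqStrategy, Measure.map_apply (measurable_lineBid_eqBid k) hm, hpre, measure_univ]

lemma ae_bidsOn_eqStrategy (k : Bidder l) : ∀ᵐ c ∂eqStrategy l k, BidsOn (demand k) c := by
  have hm : MeasurableSet {c : Item l → ℝ | BidsOn (demand k) c} := by
    unfold BidsOn; measurability
  rw [eqStrategy, ae_map_iff (measurable_lineBid_eqBid k).aemeasurable hm]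
  exact Filter.Eventually.of_forall fun u => bidsOn_lineBid k (pow_nonneg u.2.1 _)

section RivalLaw

variable {i : Bidder l} {τ : Bidder l → Measure (Item l → ℝ)}
  [∀ k, IsProbabilityMeasure (τ k)] (hτ : ∀ k ≠ i, τ k = eqStrategy l k)
include hτ

lemma ae_bidsOn_of_ne : ∀ᵐ b ∂Measure.pi τ, ∀ k ≠ i, BidsOn (demand k) (b k) := by
  refine Filter.eventually_all.2 fun k => ?_
  rcases eq_or_ne k i with rfl | hk
  · exact Filter.Eventually.of_forall fun _ h => absurd rfl h
  · exact (Measure.tendsto_eval_ae_ae.eventually (p := BidsOn (demand k))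
      ((hτ k hk).symm ▸ ae_bidsOn_eqStrategy k)).mono fun _ h _ => h

lemma measurePreserving_rivalBids :
    MeasurePreserving (rivalBids · i) (Measure.pi τ) (Measure.pi fun _ => bidLaw l) := by
  have hm : Measurable fun b : Bidder l → Item l → ℝ => rivalBids b i := by
    unfold rivalBids; fun_prop
  refine ⟨hm, (Measure.pi_eq fun A hA => ?_).symm⟩
  have hpre : (rivalBids · i) ⁻¹' Set.univ.pi A
      = {b | ∀ j, b (rival i j) ∈ {c | c (cell i j) ∈ A j}} := by
    ext b; simp [rivalBids]
  rw [Measure.map_apply hm (.univ_pi hA), hpre]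
  refine (Measure.pi_setOf_forall_comp_mem τ (rival_injective i)
    fun j => {c | c (cell i j) ∈ A j}).trans (prod_congr rfl fun j _ => ?_)
  rw [hτ _ (rival_ne i j), eqStrategy_setOf_apply_mem (cell_mem_demand_rival i j) (hA j)]

lemma integral_comp_rivalBids {g : (Fin l → ℝ) → ℝ}
    (hg : AEStronglyMeasurable g (Measure.pi fun _ => bidLaw l)) :
    ∫ b, g (rivalBids b i) ∂Measure.pi τ = ∫ r, g r ∂Measure.pi fun _ => bidLaw l := by
  have h := measurePreserving_rivalBids hτ
  rw [← h.map_eq] at hg ⊢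
  exact (integral_map h.aemeasurable hg).symm

end RivalLaw

-- Bounds, in terms of the rival bids `r` on a bidder's line, on its value (win the line when
-- `r ∈ univ.pi A`) and payment (pay `y j` when `r j ∈ B j`). Taking for `A j`, `B j` the closed
-- or the open half-line below the bidder's own bid decides how ties are counted.
noncomputable def valueBound (A : Fin l → Set ℝ) (r : Fin l → ℝ) : ℝ :=
  (Set.univ.pi A).indicator (fun _ => (l : ℝ)) r

noncomputable def paymentBound (B : Fin l → Set ℝ) (y r : Fin l → ℝ) : ℝ :=
  ∑ j, (B j).indicator (fun _ => y j) (r j)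

section Bounds

variable {A B : Fin l → Set ℝ} (hA : ∀ j, MeasurableSet (A j))
  (hB : ∀ j, MeasurableSet (B j)) (y : Fin l → ℝ) (ν : Measure ℝ) [IsProbabilityMeasure ν]

include hA in
lemma integrable_valueBound : Integrable (valueBound A) (Measure.pi fun _ => ν) :=
  (integrable_const _).indicator (.univ_pi hA)

include hB in
lemma integrable_paymentBound : Integrable (paymentBound B y) (Measure.pi fun _ => ν) :=
  integrable_finsetSum _ fun j _ => (integrable_const _).indicator (measurable_pi_apply j (hB j))

include hA in
lemma integral_valueBound :
    ∫ r, valueBound A r ∂Measure.pi (fun _ => ν) = l * ∏ j, ν.real (A j) := by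
  unfold valueBound
  rw [integral_indicator_const _ (.univ_pi hA), measureReal_def, Measure.pi_pi,
    ENNReal.toReal_prod, smul_eq_mul, mul_comm]
  rfl

include hB in
lemma integral_paymentBound :
    ∫ r, paymentBound B y r ∂Measure.pi (fun _ => ν) = ∑ j, y j * ν.real (B j) := by
  unfold paymentBound
  rw [integral_finsetSum _ fun j _ =>
    (integrable_const _).indicator (measurable_pi_apply j (hB j))]
  refine sum_congr rfl fun j _ => ?_
  have h := measurePreserving_eval (fun _ : Fin l => ν) j
  have := integral_map h.aemeasurable (f := (B j).indicator fun _ => y j)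
    (by rw [h.map_eq]; exact (measurable_const.indicator (hB j)).aestronglyMeasurable)
  rw [h.map_eq, integral_indicator_const _ (hB j), smul_eq_mul, mul_comm] at this
  exact this.symm

variable {i : Bidder l} {τ : Bidder l → Measure (Item l → ℝ)}
  [∀ k, IsProbabilityMeasure (τ k)] (hτ : ∀ k ≠ i, τ k = eqStrategy l k)
include hA hB hτ

lemma integrable_bound_rivalBids :
    Integrable (fun b => valueBound A (rivalBids b i) - paymentBound B y (rivalBids b i))
      (Measure.pi τ) :=
  (measurePreserving_rivalBids hτ).integrable_comp_of_integrable
    ((integrable_valueBound hA _).sub (integrable_paymentBound hB y _))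

lemma integral_bound_rivalBids :
    ∫ b, valueBound A (rivalBids b i) - paymentBound B y (rivalBids b i) ∂Measure.pi τ
      = l * ∏ j, (bidLaw l).real (A j) - ∑ j, y j * (bidLaw l).real (B j) := by
  rw [integral_comp_rivalBids hτ (g := fun r => valueBound A r - paymentBound B y r)
    ((integrable_valueBound hA _).sub (integrable_paymentBound hB y _)).1,
    integral_sub (integrable_valueBound hA _) (integrable_paymentBound hB y _),
    integral_valueBound hA, integral_paymentBound hB]

end Bounds

section Payoffs

variable {v : Bidder l → Finset (Item l) → ℝ} (hv : ∀ k, v k = singleMinded (demand k) l)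
  (T : TieRule (Bidder l) (Item l)) {b : Bidder l → Item l → ℝ} {i : Bidder l}

lemma mem_alloc_of_rivalBids_lt (hb : ∀ k ≠ i, BidsOn (demand k) (b k)) {j : Fin l}
    (h : rivalBids b i j < b i (cell i j)) : cell i j ∈ T.alloc b i := by
  obtain ⟨w, hw, -⟩ := T.partition b (cell i j)
  by_contra hi
  have hwi : w ≠ i := by rintro rfl; exact hi hw
  have hle := T.highest b w _ hw i
  have hpos : 0 < b w (cell i j) := (hb _ (rival_ne i j) _).1.trans_lt (h.trans_le hle)
  have hmem : cell i j ∈ demand w := by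
    by_contra hq
    exact hpos.ne' ((hb w hwi _).2 hq)
  rcases eq_or_eq_rival_of_cell_mem_demand hmem with rfl | rfl
  · exact hwi rfl
  · exact (h.trans_le hle).false

include hv in
lemma value_le_valueBound :
    v i (T.alloc b i) ≤ valueBound (fun j => Set.Iic (b i (cell i j))) (rivalBids b i) := by
  classical
  simp only [hv, singleMinded, valueBound, Set.indicator_apply, Set.mem_univ_pi, Set.mem_Iic]
  split_ifs with hsub hwin hwin <;> try positivity
  · exact le_rfl
  · exact absurd (fun j => T.highest b i _ (demand_subset_iff.1 hsub j) _) hwin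

include hv in
lemma valueBound_le_value (hb : ∀ k ≠ i, BidsOn (demand k) (b k)) :
    valueBound (fun j => Set.Iio (b i (cell i j))) (rivalBids b i) ≤ v i (T.alloc b i) := by
  classical
  simp only [hv, singleMinded, valueBound, Set.indicator_apply, Set.mem_univ_pi, Set.mem_Iio]
  split_ifs with hwin hsub hsub <;> try positivity
  · exact le_rfl
  · exact absurd (demand_subset_iff.2 fun j => mem_alloc_of_rivalBids_lt T hb (hwin j)) hsub

lemma paymentBound_le_payment (hb : ∀ k ≠ i, BidsOn (demand k) (b k)) (hbi : 0 ≤ b i) :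
    paymentBound (fun j => Set.Iio (b i (cell i j))) (fun j => b i (cell i j)) (rivalBids b i)
      ≤ ∑ q ∈ T.alloc b i, b i q := calc
  _ ≤ ∑ j, if cell i j ∈ T.alloc b i then b i (cell i j) else 0 := by
    simp only [paymentBound, Set.indicator_apply, Set.mem_Iio]
    gcongr with j
    split_ifs with hlt hmem <;> try first | exact le_rfl | exact hbi _
    exact absurd (mem_alloc_of_rivalBids_lt T hb hlt) hmem
  _ = ∑ q ∈ T.alloc b i ∩ demand i, b i q := (sum_inter_demand i _ _).symm
  _ ≤ ∑ q ∈ T.alloc b i, b i q :=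
    sum_le_sum_of_subset_of_nonneg inter_subset_left fun q _ _ => hbi q

lemma payment_le_paymentBound (hbi : BidsOn (demand i) (b i)) :
    ∑ q ∈ T.alloc b i, b i q
      ≤ paymentBound (fun j => Set.Iic (b i (cell i j))) (fun j => b i (cell i j))
          (rivalBids b i) := calc
  _ = ∑ q ∈ T.alloc b i ∩ demand i, b i q := by
    refine (sum_subset inter_subset_left fun q hq hqd => (hbi q).2 fun hd => hqd ?_).symm
    exact mem_inter.2 ⟨hq, hd⟩
  _ = ∑ j, if cell i j ∈ T.alloc b i then b i (cell i j) else 0 := sum_inter_demand i _ _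
  _ ≤ _ := by
    simp only [paymentBound, Set.indicator_apply, Set.mem_Iic]
    gcongr with j
    split_ifs with hmem hle <;> try first | exact le_rfl | exact (hbi _).1
    exact absurd (T.highest b i _ hmem _) hle

include hv in
lemma utility_le_bound (hb : ∀ k ≠ i, BidsOn (demand k) (b k)) (hbi : 0 ≤ b i) :
    utility v T b i ≤ valueBound (fun j => Set.Iic (b i (cell i j))) (rivalBids b i)
      - paymentBound (fun j => Set.Iio (b i (cell i j))) (fun j => b i (cell i j))
          (rivalBids b i) :=
  sub_le_sub (value_le_valueBound hv T) (paymentBound_le_payment T hb hbi)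

include hv in
lemma bound_le_utility (hb : ∀ k, BidsOn (demand k) (b k)) :
    valueBound (fun j => Set.Iio (b i (cell i j))) (rivalBids b i)
      - paymentBound (fun j => Set.Iic (b i (cell i j))) (fun j => b i (cell i j)) (rivalBids b i)
      ≤ utility v T b i :=
  sub_le_sub (valueBound_le_value hv T fun k _ => hb k) (payment_le_paymentBound T (hb i))

end Payoffs

lemma integral_unitInterval_pow (n : ℕ) : ∫ u : unitInterval, (u : ℝ) ^ n = 1 / (n + 1) := by
  rw [(unitInterval.measurePreserving_coe).integral_comp
      (MeasurableEmbedding.subtype_coe measurableSet_Icc) (fun x : ℝ => x ^ n),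
    integral_Icc_eq_integral_Ioc, ← intervalIntegral.integral_of_le zero_le_one, integral_pow]
  simp

lemma integrable_valueBound_rivalBids (i : Bidder l) (μ : Measure (Bidder l → Item l → ℝ))
    [IsFiniteMeasure μ] :
    Integrable (fun b => valueBound (fun j => Set.Iic (b i (cell i j))) (rivalBids b i)) μ := by
  classical
  have hset : MeasurableSet {b | ∀ j, rivalBids b i j ≤ b i (cell i j)} := by
    simp only [Set.ofPred_forall]
    exact .iInter fun j => measurableSet_le (by unfold rivalBids; fun_prop) (by fun_prop)
  refine (integrable_const (l : ℝ)).mono' ?_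
    (ae_of_all _ fun b => (norm_indicator_le_norm_self _ _).trans (by simp))
  simp only [valueBound, Set.indicator_apply, Set.mem_univ_pi, Set.mem_Iic]
  exact (Measurable.ite hset measurable_const measurable_const).aestronglyMeasurable

lemma integral_valueBound_rivalBids_le_one (hl : 2 ≤ l) (i : Bidder l) :
    ∫ b, valueBound (fun j => Set.Iic (b i (cell i j))) (rivalBids b i)
      ∂Measure.pi (eqStrategy l) ≤ 1 := by
  have hinner (u : unitInterval) :
      ∫ b, valueBound (fun j => Set.Iic (update b i (lineBid i (eqBid l u)) i (cell i j)))
        (rivalBids (update b i (lineBid i (eqBid l u))) i) ∂Measure.pi (eqStrategy l)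
        = l * (u : ℝ) ^ l := by
    have hA (j : Fin l) : MeasurableSet (Set.Iic (eqBid l u)) := measurableSet_Iic
    simp only [update_self, rivalBids_update, lineBid_cell]
    rw [integral_comp_rivalBids (fun _ _ => rfl) (integrable_valueBound hA _).1,
      integral_valueBound hA]
    simp only [← cdf_eq_real, cdf_bidLaw_eqBid hl, prod_const, card_univ, Fintype.card_fin]
  rw [Measure.integral_pi_eq_integral_integral_update_map (eqStrategy l)
    (measurable_lineBid_eqBid i) rfl (integrable_valueBound_rivalBids i _)]
  simp only [comp_apply, hinner]
  rw [integral_const_mul, integral_unitInterval_pow, mul_one_div, div_le_one (by positivity)]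
  linarith

section MixedEquilibrium

variable {v : Bidder l → Finset (Item l) → ℝ} (hv : ∀ k, v k = singleMinded (demand k) l)
  (T : TieRule (Bidder l) (Item l))
include hv

theorem integral_utility_deviation_nonpos (hl : 2 ≤ l) (i : Bidder l) {b' : Item l → ℝ}
    (hb' : ∀ q, 0 ≤ b' q) :
    ∫ b, utility v T b i ∂Measure.pi (update (eqStrategy l) i (Measure.dirac b')) ≤ 0 := by
  set τ := update (eqStrategy l) i (Measure.dirac b')
  have hτ : ∀ k ≠ i, τ k = eqStrategy l k := fun k hk => update_of_ne hk _ _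
  have : ∀ k, IsProbabilityMeasure (τ k) := fun k => by
    rcases eq_or_ne k i with rfl | hk
    · simp only [τ, update_self]; infer_instance
    · rw [hτ k hk]; infer_instance
  -- The tie rule need not be measurable, nor the utility integrable; if it is not, its
  -- integral is `0`.
  by_cases hint : Integrable (fun b => utility v T b i) (Measure.pi τ)
  swap
  · rw [integral_undef hint]
  set x := fun j => b' (cell i j)
  have hA (j : Fin l) : MeasurableSet (Set.Iic (x j)) := measurableSet_Iic
  have hB (j : Fin l) : MeasurableSet (Set.Iio (x j)) := measurableSet_Iio
  have hdev : ∀ᵐ b ∂Measure.pi τ, b i = b' :=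
    Measure.tendsto_eval_ae_ae.eventually (p := (· = b')) (by simp [τ, ae_dirac_eq])
  calc ∫ b, utility v T b i ∂Measure.pi τ
      ≤ ∫ b, valueBound (fun j => Set.Iic (x j)) (rivalBids b i)
          - paymentBound (fun j => Set.Iio (x j)) x (rivalBids b i) ∂Measure.pi τ := by
        refine integral_mono_ae hint (integrable_bound_rivalBids hA hB x hτ) ?_
        filter_upwards [hdev, ae_bidsOn_of_ne hτ] with b hbi hb
        have := utility_le_bound hv T hb (hbi ▸ hb')
        rwa [hbi] at this
    _ = l * ∏ j, cdf (bidLaw l) (x j) - ∑ j, x j * cdf (bidLaw l) (x j) := by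
        rw [integral_bound_rivalBids hA hB x hτ]
        simp only [cdf_eq_real, measureReal_Iio_bidLaw hl]
    _ ≤ 0 := sub_nonpos.2 (mul_prod_cdf_bidLaw_le_sum hl x fun j => hb' _)

theorem integral_utility_update_eqBid_nonneg (hl : 2 ≤ l) (i : Bidder l) (u : unitInterval) :
    0 ≤ ∫ b, utility v T (update b i (lineBid i (eqBid l u))) i
      ∂Measure.pi (eqStrategy l) := by
  set t := eqBid l u
  by_cases hint : Integrable (fun b => utility v T (update b i (lineBid i t)) i)
    (Measure.pi (eqStrategy l))
  swap
  · rw [integral_undef hint]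
  have hA (j : Fin l) : MeasurableSet (Set.Iio t) := measurableSet_Iio
  have hB (j : Fin l) : MeasurableSet (Set.Iic t) := measurableSet_Iic
  have hτ : ∀ k ≠ i, eqStrategy l k = eqStrategy l k := fun _ _ => rfl
  have hae : ∀ᵐ b ∂Measure.pi (eqStrategy l),
      ∀ k, BidsOn (demand k) (update b i (lineBid i t) k) := by
    filter_upwards [ae_bidsOn_of_ne hτ] with b hb k
    rcases eq_or_ne k i with rfl | hk
    · rw [update_self]; exact bidsOn_lineBid k (pow_nonneg u.2.1 _)
    · rw [update_of_ne hk]; exact hb k hk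
  calc (0 : ℝ) = l * ∏ _j : Fin l, cdf (bidLaw l) t - ∑ _j : Fin l, t * cdf (bidLaw l) t :=
        (sub_eq_zero.2 (mul_prod_cdf_bidLaw_eqBid hl u)).symm
    _ = ∫ b, valueBound (fun _ => Set.Iio t) (rivalBids b i)
          - paymentBound (fun _ => Set.Iic t) (fun _ => t) (rivalBids b i)
          ∂Measure.pi (eqStrategy l) := by
        rw [integral_bound_rivalBids hA hB _ hτ]
        simp only [cdf_eq_real, measureReal_Iio_bidLaw hl]
    _ ≤ _ := by
        refine integral_mono_ae (integrable_bound_rivalBids hA hB _ hτ) hint ?_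
        filter_upwards [hae] with b hb
        have := bound_le_utility hv T hb (i := i)
        simpa only [update_self, lineBid_cell, rivalBids_update] using this

theorem integral_utility_eqStrategy_nonneg (hl : 2 ≤ l) (i : Bidder l) :
    0 ≤ ∫ b, utility v T b i ∂Measure.pi (eqStrategy l) := by
  by_cases hint : Integrable (fun b => utility v T b i) (Measure.pi (eqStrategy l))
  swap
  · rw [integral_undef hint]
  rw [Measure.integral_pi_eq_integral_integral_update_map (eqStrategy l)
    (measurable_lineBid_eqBid i) rfl hint]
  exact integral_nonneg fun u => integral_utility_update_eqBid_nonneg hv T hl i u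

theorem integral_welfare_eqStrategy_le (hl : 2 ≤ l) :
    ∫ b, welfare v (T.alloc b) ∂Measure.pi (eqStrategy l) ≤ 2 * l := by
  by_cases hint : Integrable (fun b => welfare v (T.alloc b)) (Measure.pi (eqStrategy l))
  swap
  · rw [integral_undef hint]; positivity
  have hint' (i : Bidder l) := integrable_valueBound_rivalBids i (Measure.pi (eqStrategy l))
  calc ∫ b, welfare v (T.alloc b) ∂Measure.pi (eqStrategy l)
      ≤ ∫ b, ∑ i, valueBound (fun j => Set.Iic (b i (cell i j))) (rivalBids b i)
          ∂Measure.pi (eqStrategy l) :=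
        integral_mono hint (integrable_finsetSum _ fun i _ => hint' i)
          fun b => sum_le_sum fun i _ => value_le_valueBound hv T
    _ = ∑ i, ∫ b, valueBound (fun j => Set.Iic (b i (cell i j))) (rivalBids b i)
          ∂Measure.pi (eqStrategy l) := integral_finsetSum _ fun i _ => hint' i
    _ ≤ ∑ _i : Bidder l, (1 : ℝ) :=
        sum_le_sum fun i _ => integral_valueBound_rivalBids_le_one hl i
    _ = 2 * l := by simp [two_mul]

end MixedEquilibrium

end RowsColumns

open RowsColumns in
/-- the rows/columns game on `m = l²` items with `l` row bidders and `l`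
column bidders, each single-minded with value `l` for its row (resp. column). It has, for a
suitable tie-breaking rule, a pure Nash equilibrium of social welfare `l²`, which is the
optimal social welfare (price of stability `1`), and for every tie-breaking rule it has a
mixed Nash equilibrium of expected social welfare at most `2l`; hence its price of anarchy
is at least `l/2 = √m/2`. -/
theorem rows_columns_game {l : ℕ} (hl : 2 ≤ l)
    (v : (Fin l ⊕ Fin l) → Finset (Fin l × Fin l) → ℝ)
    (hrow : ∀ i : Fin l, v (Sum.inl i) =
      singleMinded (Finset.univ.filter fun q : Fin l × Fin l => q.1 = i) (l : ℝ))
    (hcol : ∀ j : Fin l, v (Sum.inr j) =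
      singleMinded (Finset.univ.filter fun q : Fin l × Fin l => q.2 = j) (l : ℝ)) :
    (∃ (T : TieRule (Fin l ⊕ Fin l) (Fin l × Fin l))
        (b : (Fin l ⊕ Fin l) → Fin l × Fin l → ℝ),
        (∀ i q, 0 ≤ b i q) ∧ PureNash v T b ∧
        welfare v (T.alloc b) = (l : ℝ) ^ 2 ∧
        IsGreatest {w | ∃ S : (Fin l ⊕ Fin l) → Finset (Fin l × Fin l),
          IsAllocation S ∧ welfare v S = w} ((l : ℝ) ^ 2)) ∧
    (∀ T : TieRule (Fin l ⊕ Fin l) (Fin l × Fin l),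
        ∃ σ : (Fin l ⊕ Fin l) → Measure (Fin l × Fin l → ℝ),
          (∀ i, IsProbabilityMeasure (σ i)) ∧ NonnegMixed σ ∧
          MixedNash v T σ ∧ expectedWelfare v T σ ≤ 2 * l) := by
  have hv : ∀ k, v k = singleMinded (demand k) l := by
    rintro (a | c)
    exacts [hrow a, hcol c]
  refine ⟨⟨rowsFirst l, fun k => lineBid k 1, fun k q => (bidsOn_lineBid k zero_le_one q).1,
      pureNash_lineBid_one hv, welfare_rowsFirst_lineBid_one hv,
      ⟨_, (rowsFirst l).partition _, welfare_rowsFirst_lineBid_one hv⟩, ?_⟩,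
    fun T => ⟨eqStrategy l, inferInstance, eqStrategy_nonneg, fun i b' hb' => ?_,
      integral_welfare_eqStrategy_le hv T hl⟩⟩
  · rintro w ⟨S, hS, rfl⟩
    exact welfare_le_sq hv hS
  · exact (integral_utility_deviation_nonpos hv T hl i hb').trans
      (integral_utility_eqStrategy_nonneg hv T hl i)
end
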